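/- arXiv:1705.03335 — 5 statements merged into one kernel-verified Lean document; each statement's English description precedes it below -/
import Mathlib

section
/- Let k ≥ 3 be an integer and ε ∈ (0,1) be such that 1/(2ε) is a positive integer. Suppose F ⊆ ℝ does not contain any (k,ε)-AP. Then for every closed interval I of length R > 0 and every positive integer m, the set I ∩ F can be covered by at most ((k−1)/(2ε))^m closed intervals each of length (2ε/k)^m · R. In particular, N(I ∩ F, r) ≤ ((k−1)/(2ε))^m whenever r ≥ (2ε/k)^m · R. -/
/-!
Cut `[u, u + k n δ]` into `k n` cells of length `δ`. For each residue `i < n`, the cells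
`i + j n` (`j < k`) are the `ε`-windows of an arithmetic progression of gap `n δ`, so one of them
misses `F`; hence at most `(k - 1) n` closed cells cover `F ∩ [u, u + k n δ]`, and iterating gives
covers by `((k - 1) n) ^ m` closed intervals. In particular `F` is Lebesgue-null.

Open intervals of the same length need more care, since two closed cells may share an endpoint
in `F`. The set of left endpoints of open windows of length `δ` meeting `E = F ∩ [u, u + k n δ]`
has measure `< ((k - 1) n + 1) δ` (the same argument with slightly longer windows). Averaging over
a random shift of the grid of mesh `δ`, some shift puts at most `(k - 1) n` grid points in this
set and none in the null set `E`; the open cells starting at those grid points cover `E`.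
-/

/-- `b 0, …, b (k-1)` is a `(k, ε)`-AP. -/
def IsKAP (k : ℕ) (ε : ℝ) (b : ℕ → ℝ) : Prop :=
  ∃ a Δ : ℝ, 0 < Δ ∧ ∀ i < k, |b i - (a + i * Δ)| ≤ ε * Δ

/-- A set `F ⊆ ℝ` contains a `(k, ε)`-AP. -/
def ContainsKAP (F : Set ℝ) (k : ℕ) (ε : ℝ) : Prop :=
  ∃ b : ℕ → ℝ, (∀ i < k, b i ∈ F) ∧ IsKAP k ε b

/-- `coverN E r` is the smallest number of open sets of diameter at most `r`
needed to cover `E`. -/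
noncomputable def coverN {X : Type*} [PseudoEMetricSpace X] (E : Set X) (r : ℝ) : ℕ :=
  sInf {n : ℕ | ∃ U : Fin n → Set X,
    (∀ i, IsOpen (U i) ∧ EMetric.diam (U i) ≤ ENNReal.ofReal r) ∧ E ⊆ ⋃ i, U i}

open Set MeasureTheory Filter Topology
open scoped ENNReal Finset

theorem exists_gap_of_not_containsKAP {F : Set ℝ} {k : ℕ} {ε : ℝ} (hF : ¬ ContainsKAP F k ε)
    (a : ℝ) {Δ : ℝ} (hΔ : 0 < Δ) : ∃ j < k, ∀ x ∈ F, ε * Δ < |x - (a + j * Δ)| := by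
  by_contra! h
  choose b hbF hb using h
  exact hF ⟨fun i => if hi : i < k then b i hi else 0, fun i hi => by simpa [hi] using hbF i hi,
    a, Δ, hΔ, fun i hi => by simpa [hi] using hb i hi⟩

theorem exists_lt_mem_Ico_add_mul {a δ y : ℝ} {N : ℕ} (hδ : 0 < δ)
    (hy : y ∈ Ico a (a + N * δ)) : ∃ c < N, y ∈ Ico (a + c * δ) (a + c * δ + δ) := by
  have h0 : 0 ≤ (y - a) / δ := div_nonneg (by linarith [hy.1]) hδ.le
  refine ⟨⌊(y - a) / δ⌋₊, (Nat.floor_lt h0).2 ((div_lt_iff₀ hδ).2 (by linarith [hy.2])), ?_, ?_⟩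
  · have := Nat.floor_le h0
    rw [le_div_iff₀ hδ] at this
    linarith
  · have := Nat.lt_floor_add_one ((y - a) / δ)
    rw [div_lt_iff₀ hδ] at this
    linarith

theorem exists_lt_mem_Ioo_add_mul {a δ y : ℝ} {N : ℕ} (hδ : 0 < δ)
    (hy : y ∈ Ico a (a + N * δ)) (hgrid : ∀ c < N, a + c * δ ≠ y) :
    ∃ c < N, y ∈ Ioo (a + c * δ) (a + c * δ + δ) := by
  obtain ⟨c, hc, hyc⟩ := exists_lt_mem_Ico_add_mul hδ hy
  exact ⟨c, hc, lt_of_le_of_ne hyc.1 (hgrid c hc), hyc.2⟩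

theorem exists_lt_mem_Icc_add_mul {a δ y : ℝ} {N : ℕ} (hδ : 0 < δ) (hN : 0 < N)
    (hy : y ∈ Icc a (a + N * δ)) : ∃ c < N, y ∈ Icc (a + c * δ) (a + c * δ + δ) := by
  rcases hy.2.lt_or_eq with hlt | rfl
  · obtain ⟨c, hc, hyc⟩ := exists_lt_mem_Ico_add_mul hδ ⟨hy.1, hlt⟩
    exact ⟨c, hc, Ico_subset_Icc_self hyc⟩
  · refine ⟨N - 1, by omega, ?_, ?_⟩ <;> rw [Nat.cast_sub hN, Nat.cast_one] <;> linarith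

theorem exists_subset_biUnion_of_forall_inter_subset_biUnion {α ι : Type*} {E : Set α}
    {C D : ι → Set α} {T : Finset ι} {a b : ℕ} (hT : #T ≤ a) (hE : E ⊆ ⋃ x ∈ T, C x)
    (hC : ∀ x ∈ T, ∃ S : Finset ι, #S ≤ b ∧ E ∩ C x ⊆ ⋃ y ∈ S, D y) :
    ∃ S : Finset ι, #S ≤ a * b ∧ E ⊆ ⋃ y ∈ S, D y := by
  classical
  choose! S hS hCS using hC
  refine ⟨T.biUnion S, (Finset.card_biUnion_le_card_mul _ _ _ hS).trans
    (Nat.mul_le_mul_right _ hT), fun e he => ?_⟩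
  obtain ⟨x, hx, hex⟩ := mem_iUnion₂.1 (hE he)
  obtain ⟨y, hy, hey⟩ := mem_iUnion₂.1 (hCS x hx ⟨he, hex⟩)
  exact mem_iUnion₂.2 ⟨y, Finset.mem_biUnion.2 ⟨x, hx, hy⟩, hey⟩

theorem exists_range_superset_of_card_le {α : Type*} [Nonempty α] {S : Finset α} {N : ℕ}
    (hS : #S ≤ N) : ∃ t : Fin N → α, ↑S ⊆ range t := by
  classical
  refine ⟨fun i => if h : (i : ℕ) < #S then S.equivFin.symm ⟨i, h⟩ else Classical.arbitrary α,
    fun x hx => ⟨Fin.castLE hS (S.equivFin ⟨x, hx⟩), by simp⟩⟩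

theorem coverN_le_card_of_subset_biUnion_Ioo {E : Set ℝ} {S : Finset ℝ} {L r : ℝ} (hLr : L ≤ r)
    (hE : E ⊆ ⋃ x ∈ S, Ioo x (x + L)) : coverN E r ≤ #S := by
  refine Nat.sInf_le ⟨fun i => Ioo (S.equivFin.symm i) (S.equivFin.symm i + L),
    fun i => ⟨isOpen_Ioo, ?_⟩, fun e he => ?_⟩
  · show Metric.ediam _ ≤ _
    rw [Real.ediam_Ioo]
    exact ENNReal.ofReal_le_ofReal (by linarith)
  · obtain ⟨x, hx, hex⟩ := mem_iUnion₂.1 (hE he)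
    exact mem_iUnion.2 ⟨S.equivFin ⟨x, hx⟩, by simpa using hex⟩

def hittingSet (E : Set ℝ) (w : ℝ) : Set ℝ := {y | ∃ e ∈ E, e ∈ Ioo y (y + w)}

theorem hittingSet_eq_biUnion (E : Set ℝ) (w : ℝ) :
    hittingSet E w = ⋃ e ∈ E, Ioo (e - w) e := by
  ext y
  simp only [hittingSet, mem_ofPred_eq, mem_iUnion, mem_Ioo, exists_prop]
  exact exists_congr fun e => and_congr_right fun _ => by
    constructor <;> rintro ⟨h₁, h₂⟩ <;> constructor <;> linarith

theorem isOpen_hittingSet (E : Set ℝ) (w : ℝ) : IsOpen (hittingSet E w) := by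
  rw [hittingSet_eq_biUnion]
  exact isOpen_biUnion fun _ _ => isOpen_Ioo

theorem hittingSet_mono (E : Set ℝ) {w w' : ℝ} (h : w ≤ w') : hittingSet E w ⊆ hittingSet E w' :=
  fun _ ⟨e, he, h₁, h₂⟩ => ⟨e, he, h₁, by linarith⟩

theorem volume_hittingSet_add_le {E : Set ℝ} (hE : E.Nonempty) (hbdd : BddBelow E) {δ w : ℝ}
    (hδ : 0 ≤ δ) (hδw : δ ≤ w) :
    volume (hittingSet E δ) + ENNReal.ofReal (w - δ) ≤ volume (hittingSet E w) := by
  set e₀ := sInf E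
  have hleft : Ioo (e₀ - w) (e₀ - δ) ⊆ hittingSet E w := by
    rintro y ⟨h₁, h₂⟩
    obtain ⟨e, he, hey⟩ := (csInf_lt_iff hbdd hE).1 (show e₀ < y + w by linarith)
    exact ⟨e, he, by linarith [csInf_le hbdd he], hey⟩
  have hdisj : Disjoint (hittingSet E δ) (Ioo (e₀ - w) (e₀ - δ)) :=
    disjoint_left.2 fun y ⟨e, he, h₁, h₂⟩ hy => by linarith [csInf_le hbdd he, hy.2]
  have hvol : volume (Ioo (e₀ - w) (e₀ - δ)) = ENNReal.ofReal (w - δ) := by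
    rw [Real.volume_Ioo]
    ring_nf
  rw [← hvol, ← measure_union hdisj measurableSet_Ioo]
  exact measure_mono (union_subset (hittingSet_mono E hδw) hleft)

theorem volume_inter_Ico_le_of_forall_exists_add_mul_notMem {H : Set ℝ} (hH : MeasurableSet H)
    {k : ℕ} {p : ℝ} (hp : 0 < p) (h : ∀ t, ∃ j < k, t + j * p ∉ H) (Y : ℝ) :
    volume (H ∩ Ico Y (Y + k * p)) ≤ ENNReal.ofReal ((k - 1) * p) := by
  classical
  have hk : 1 ≤ k := by
    obtain ⟨j, hj, -⟩ := h 0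
    omega
  set I := Ico Y (Y + p)
  set T : ℕ → Set ℝ := fun j => I ∩ (· + j * p) ⁻¹' H
  have hT (j : ℕ) : MeasurableSet (T j) :=
    measurableSet_Ico.inter (hH.preimage (measurable_add_const _))
  have hslice (j : ℕ) : volume (H ∩ Ico (Y + j * p) (Y + j * p + p)) = volume (T j) := by
    rw [← measure_preimage_add_right _ (j * p), preimage_inter, preimage_add_const_Ico, inter_comm]
    simp only [T, I, add_sub_cancel_right, add_right_comm]
  have hcount (t : ℝ) : ∑ j ∈ Finset.range k, (T j).indicator 1 t ≤
      I.indicator (fun _ => ((k - 1 : ℕ) : ℝ≥0∞)) t := by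
    by_cases ht : t ∈ I
    · obtain ⟨j₀, hj₀, hj₀H⟩ := h t
      simp only [T, indicator_apply, mem_inter_iff, ht, true_and, mem_preimage, Pi.one_apply,
        if_true]
      rw [Finset.sum_boole, Nat.cast_le]
      calc _ ≤ #((Finset.range k).erase j₀) := Finset.card_le_card fun j hj => by
              simp only [Finset.mem_filter] at hj
              exact Finset.mem_erase.2 ⟨fun h => hj₀H (h ▸ hj.2), hj.1⟩
        _ = k - 1 := by simp [Finset.card_erase_of_mem (Finset.mem_range.2 hj₀)]
    · simp [T, indicator_of_notMem, ht]
  calc volume (H ∩ Ico Y (Y + k * p))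
      ≤ ∑ j ∈ Finset.range k, volume (H ∩ Ico (Y + j * p) (Y + j * p + p)) := by
        refine (measure_mono fun y hy => ?_).trans (measure_biUnion_finset_le _ _)
        obtain ⟨j, hj, hyj⟩ := exists_lt_mem_Ico_add_mul hp hy.2
        exact mem_iUnion₂.2 ⟨j, Finset.mem_range.2 hj, hy.1, hyj⟩
    _ = ∫⁻ t, ∑ j ∈ Finset.range k, (T j).indicator 1 t := by
        rw [lintegral_finsetSum _ fun j _ => measurable_one.indicator (hT j)]
        simp only [hslice, lintegral_indicator_one (hT _)]
    _ ≤ ∫⁻ t, I.indicator (fun _ => ((k - 1 : ℕ) : ℝ≥0∞)) t := lintegral_mono hcount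
    _ = ENNReal.ofReal ((k - 1) * p) := by
        rw [lintegral_indicator_const measurableSet_Ico, Real.volume_Ico, ← ENNReal.ofReal_natCast,
          ← ENNReal.ofReal_mul (by positivity), Nat.cast_sub hk, Nat.cast_one]
        ring_nf

theorem setLIntegral_sum_indicator_preimage_add_le {A : Set ℝ} (hA : MeasurableSet A) (a δ : ℝ)
    (N : ℕ) : ∫⁻ s in Ioo 0 δ, ∑ c ∈ Finset.range N, ((· + (a + c * δ)) ⁻¹' A).indicator 1 s ≤
      volume A := by
  have hcells : (↑(Finset.range N) : Set ℕ).PairwiseDisjoint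
      fun c => A ∩ Ioo (a + c * δ) (a + c * δ + δ) := by
    intro c _ c' _ hcc'
    refine disjoint_left.2 fun y hy hy' => ?_
    rcases lt_or_gt_of_ne hcc' with h | h
    · have : (c : ℝ) + 1 ≤ c' := by exact_mod_cast h
      nlinarith [hy.2.1, hy.2.2, hy'.2.1, hy'.2.2]
    · have : (c' : ℝ) + 1 ≤ c := by exact_mod_cast h
      nlinarith [hy.2.1, hy.2.2, hy'.2.1, hy'.2.2]
  have hAc (c : ℕ) : MeasurableSet ((· + (a + c * δ)) ⁻¹' A) := hA.preimage (measurable_add_const _)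
  calc ∫⁻ s in Ioo 0 δ, ∑ c ∈ Finset.range N, ((· + (a + c * δ)) ⁻¹' A).indicator 1 s
      = ∑ c ∈ Finset.range N, volume (A ∩ Ioo (a + c * δ) (a + c * δ + δ)) := by
        rw [lintegral_finsetSum _ fun c _ => measurable_one.indicator (hAc c)]
        refine Finset.sum_congr rfl fun c _ => ?_
        rw [lintegral_indicator_one (hAc c), Measure.restrict_apply (hAc c),
          ← measure_preimage_add_right volume (a + c * δ) (A ∩ _), preimage_inter,
          preimage_add_const_Ioo]
        simp
    _ = volume (⋃ c ∈ Finset.range N, A ∩ Ioo (a + c * δ) (a + c * δ + δ)) :=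
        (measure_biUnion_finset hcells fun c _ => hA.inter measurableSet_Ioo).symm
    _ ≤ volume A := measure_mono (iUnion₂_subset fun _ _ => inter_subset_left)

theorem exists_Ioo_cover_of_volume_hittingSet_lt {E : Set ℝ} {u δ : ℝ} {N M : ℕ} (hδ : 0 < δ)
    (hE : E ⊆ Icc u (u + N * δ)) (hE₀ : volume E = 0)
    (hA : volume (hittingSet E δ) < ENNReal.ofReal ((M + 1) * δ)) :
    ∃ S : Finset ℝ, #S ≤ M ∧ E ⊆ ⋃ x ∈ S, Ioo x (x + δ) := by
  classical
  -- Shift the grid `u - δ + c * δ` (`c ≤ N`) by a random `s ∈ (0, δ)`: on average fewer than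
  -- `M + 1` grid points lie in the hitting set, and almost surely none lies in `E`.
  set A := hittingSet E δ
  have hAm : MeasurableSet A := (isOpen_hittingSet E δ).measurableSet
  set g : ℕ → ℝ → ℝ := fun c s => s + (u - δ + c * δ)
  set count : ℝ → ℝ≥0∞ := fun s => ∑ c ∈ Finset.range (N + 1), (g c ⁻¹' A).indicator 1 s
  set μ := volume.restrict (Ioo 0 δ)
  have hμ : μ univ = ENNReal.ofReal δ := by simp [μ]
  have hμ₀ : μ ≠ 0 := by
    rw [← Measure.measure_univ_ne_zero, hμ]
    exact ENNReal.ofReal_ne_zero_iff.2 hδ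
  have hint : ∫⁻ s, count s ∂μ < (M + 1) * μ univ := by
    refine (setLIntegral_sum_indicator_preimage_add_le hAm (u - δ) δ (N + 1)).trans_lt ?_
    rwa [hμ, ← ENNReal.ofReal_natCast, ← ENNReal.ofReal_one,
      ← ENNReal.ofReal_add (by positivity) zero_le_one, ← ENNReal.ofReal_mul (by positivity)]
  have hnull : μ ((Ioo 0 δ)ᶜ ∪ ⋃ c ∈ Finset.range (N + 1), g c ⁻¹' E) = 0 := by
    refine measure_union_null (by simp [μ]) ((measure_biUnion_null_iff (Finset.countable_toSet _)).2
      fun c _ => Measure.absolutelyContinuous_restrict ?_)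
    rwa [measure_preimage_add_right]
  have hcm : Measurable count :=
    Finset.measurable_sum _ fun c _ =>
      measurable_one.indicator (hAm.preimage (measurable_add_const _))
  obtain ⟨s, hs, hcount⟩ := exists_notMem_null_le_laverage hμ₀ hcm.aemeasurable hnull
  rw [laverage_eq] at hcount
  simp only [mem_union, mem_compl_iff, not_or, not_not, mem_iUnion₂, not_exists, mem_preimage] at hs
  obtain ⟨hs₀, hsE⟩ := hs
  set C := (Finset.range (N + 1)).filter fun c => g c s ∈ A
  have hC : #C ≤ M := by
    have : count s = #C := by simp [count, C, indicator_apply, Finset.sum_boole]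
    rw [this] at hcount
    exact Nat.lt_succ_iff.1 (by exact_mod_cast hcount.trans_lt (ENNReal.div_lt_of_lt_mul hint))
  refine ⟨C.image fun c => g c s, Finset.card_image_le.trans hC, fun e he => ?_⟩
  obtain ⟨c, hc, hce⟩ := exists_lt_mem_Ioo_add_mul (a := s + (u - δ)) (y := e) (N := N + 1) hδ
    ⟨by linarith [(hE he).1, hs₀.2], by push_cast; linarith [(hE he).2, hs₀.1]⟩
    fun c hc h => hsE c (Finset.mem_range.2 hc) (by simpa only [g, ← add_assoc, h])
  rw [add_assoc] at hce
  exact mem_iUnion₂.2 ⟨g c s, Finset.mem_image_of_mem _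
    (Finset.mem_filter.2 ⟨Finset.mem_range.2 hc, e, he, hce⟩), hce⟩

section NoKAP

variable {F : Set ℝ} {k n : ℕ} {ε : ℝ}

theorem exists_Icc_cover_one (hk : 0 < k) (hn : 0 < n) (hεn : 2 * ε * n = 1)
    (hF : ¬ ContainsKAP F k ε) (u : ℝ) {δ : ℝ} (hδ : 0 < δ) :
    ∃ S : Finset ℝ, #S ≤ (k - 1) * n ∧
      F ∩ Icc u (u + (k * n : ℝ) * δ) ⊆ ⋃ x ∈ S, Icc x (x + δ) := by
  classical
  have hεδ : ε * (n * δ) = δ / 2 := by linear_combination δ / 2 * hεn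
  choose bad hbad hgap using fun i : ℕ =>
    exists_gap_of_not_containsKAP hF (u + i * δ + δ / 2) (by positivity : (0 : ℝ) < n * δ)
  set B := (Finset.range n).image fun i => i + bad i * n
  have hB : #B = n := by
    rw [Finset.card_image_of_injOn, Finset.card_range]
    intro i hi i' hi' h
    simpa [Nat.mod_eq_of_lt (Finset.mem_range.1 hi), Nat.mod_eq_of_lt (Finset.mem_range.1 hi')]
      using congrArg (· % n) h
  have hBsub : B ⊆ Finset.range (k * n) := by
    simp only [B, Finset.image_subset_iff, Finset.mem_range]
    intro i hi
    nlinarith [hbad i]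
  refine ⟨(Finset.range (k * n) \ B).image fun t : ℕ => u + t * δ, ?_, ?_⟩
  · calc _ ≤ #(Finset.range (k * n) \ B) := Finset.card_image_le
      _ = (k - 1) * n := by
        rw [Finset.card_sdiff_of_subset hBsub, hB, Finset.card_range, Nat.sub_mul, one_mul]
  · rintro e ⟨heF, he⟩
    obtain ⟨t, ht, het⟩ := exists_lt_mem_Icc_add_mul (N := k * n) hδ (by positivity)
      (by exact_mod_cast he)
    refine mem_iUnion₂.2 ⟨_, Finset.mem_image_of_mem _
      (Finset.mem_sdiff.2 ⟨Finset.mem_range.2 ht, ?_⟩), het⟩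
    simp only [B, Finset.mem_image, Finset.mem_range]
    rintro ⟨i, -, rfl⟩
    have hgapi := hgap i e heF
    rw [hεδ, lt_abs] at hgapi
    push_cast at het
    obtain ⟨h₁, h₂⟩ := het
    rcases hgapi with h | h <;> linarith

theorem exists_Icc_cover (hk : 0 < k) (hn : 0 < n) (hεn : 2 * ε * n = 1)
    (hF : ¬ ContainsKAP F k ε) (m : ℕ) (u : ℝ) {δ : ℝ} (hδ : 0 < δ) :
    ∃ S : Finset ℝ, #S ≤ ((k - 1) * n) ^ m ∧
      F ∩ Icc u (u + (k * n : ℝ) ^ m * δ) ⊆ ⋃ x ∈ S, Icc x (x + δ) := by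
  have hkn : (0 : ℝ) < k * n := by exact_mod_cast Nat.mul_pos hk hn
  induction m generalizing u with
  | zero => exact ⟨{u}, by simp, fun e he => by simpa using he.2⟩
  | succ m ih =>
    obtain ⟨T, hT, hFT⟩ := exists_Icc_cover_one hk hn hεn hF u (mul_pos (pow_pos hkn m) hδ)
    rw [pow_succ', pow_succ' (k * n : ℝ)]
    refine exists_subset_biUnion_of_forall_inter_subset_biUnion hT ?_
      fun x _ => (ih x).imp fun S hS =>
        ⟨hS.1, (inter_subset_inter_left _ inter_subset_left).trans hS.2⟩
    simpa only [mul_assoc] using hFT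

theorem volume_eq_zero_of_not_containsKAP (hk : 0 < k) (hn : 0 < n) (hεn : 2 * ε * n = 1)
    (hF : ¬ ContainsKAP F k ε) : volume F = 0 := by
  suffices h : ∀ u : ℝ, volume (F ∩ Icc u (u + 1)) = 0 by
    refine measure_mono_null (fun x hx => ?_) (measure_iUnion_null fun j : ℤ => h j)
    exact mem_iUnion.2 ⟨⌊x⌋, hx, Int.floor_le x, (Int.lt_floor_add_one x).le⟩
  intro u
  set q : ℝ := ((k - 1) * n : ℕ) / (k * n : ℝ)
  have hq : q < 1 := by
    rw [div_lt_one (by positivity)]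
    exact_mod_cast Nat.mul_lt_mul_of_pos_right (Nat.sub_lt hk one_pos) hn
  have hbound (m : ℕ) : volume (F ∩ Icc u (u + 1)) ≤ ENNReal.ofReal (q ^ m) := by
    obtain ⟨S, hS, hcov⟩ :=
      exists_Icc_cover hk hn hεn hF m u (δ := 1 / (k * n : ℝ) ^ m) (by positivity)
    rw [mul_one_div_cancel (by positivity)] at hcov
    calc volume (F ∩ Icc u (u + 1))
        ≤ ∑ x ∈ S, volume (Icc x (x + 1 / (k * n : ℝ) ^ m)) :=
          (measure_mono hcov).trans (measure_biUnion_finset_le _ _)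
      _ = #S * ENNReal.ofReal (1 / (k * n : ℝ) ^ m) := by simp [Real.volume_Icc]
      _ ≤ (((k - 1) * n) ^ m : ℕ) * ENNReal.ofReal (1 / (k * n : ℝ) ^ m) := by gcongr
      _ = ENNReal.ofReal (q ^ m) := by
        rw [← ENNReal.ofReal_natCast, ← ENNReal.ofReal_mul (by positivity), div_pow]
        push_cast
        ring_nf
  have hlim : Tendsto (fun m : ℕ => ENNReal.ofReal (q ^ m)) atTop (𝓝 0) := by
    simpa using ENNReal.tendsto_ofReal (tendsto_pow_atTop_nhds_zero_of_lt_one (by positivity) hq)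
  exact nonpos_iff_eq_zero.1 (ge_of_tendsto' hlim hbound)

theorem exists_add_mul_notMem_hittingSet (hF : ¬ ContainsKAP F k ε) (t : ℝ) {p : ℝ} (hp : 0 < p) :
    ∃ j < k, t + j * p ∉ hittingSet F (2 * ε * p) := by
  obtain ⟨j, hj, hgap⟩ := exists_gap_of_not_containsKAP hF (t + ε * p) hp
  refine ⟨j, hj, fun ⟨e, he, h₁, h₂⟩ => ?_⟩
  rcases lt_abs.1 (hgap e he) with h | h <;> linarith

theorem volume_hittingSet_lt (hk : 2 ≤ k) (hn : 0 < n) (hεn : 2 * ε * n = 1)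
    (hF : ¬ ContainsKAP F k ε) {E : Set ℝ} (hEF : E ⊆ F) (hE : E.Nonempty) {u δ : ℝ} (hδ : 0 < δ)
    (hEu : E ⊆ Icc u (u + (k * n : ℝ) * δ)) :
    volume (hittingSet E δ) < ENNReal.ofReal (((k - 1) * n + 1) * δ) := by
  have hkn : (1 : ℝ) < k * n := by
    have : 1 < k * n := by nlinarith
    exact_mod_cast this
  -- `k` windows of length `w > δ` and gap `n * w`, the first starting at `sInf E - w`, span `E`;
  -- the extra `w - δ` makes the bound strict
  set w := (k * n : ℝ) * δ / (k * n - 1)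
  have hw : (k * n - 1) * w = k * n * δ := mul_div_cancel₀ _ (by linarith)
  have hδw : δ < w := by nlinarith
  have hbdd : BddBelow E := ⟨u, fun e he => (hEu he).1⟩
  set e₀ := sInf E
  have hu : u ≤ e₀ := le_csInf hE fun e he => (hEu he).1
  have hwide : volume (hittingSet E w) ≤ ENNReal.ofReal ((k - 1) * (n * w)) := by
    have hsub : hittingSet E w ⊆
        hittingSet F (2 * ε * (n * w)) ∩ Ico (e₀ - w) (e₀ - w + k * (n * w)) := by
      rintro y ⟨e, he, h₁, h₂⟩
      have := csInf_le hbdd he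
      have := (hEu he).2
      refine ⟨⟨e, hEF he, h₁, by linear_combination h₂ - w * hεn⟩, by linarith, by linarith⟩
    exact (measure_mono hsub).trans (volume_inter_Ico_le_of_forall_exists_add_mul_notMem
      (isOpen_hittingSet _ _).measurableSet (by positivity)
      (fun t => exists_add_mul_notMem_hittingSet hF t (by positivity)) _)
  have hgain := volume_hittingSet_add_le hE hbdd hδ.le hδw.le
  have hlt : (k - 1) * (n * w) < ((k - 1) * n + 1) * δ + (w - δ) := by
    have : (n : ℝ) * δ < n * w := mul_lt_mul_of_pos_left hδw (by positivity)
    linarith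
  have hk1 : (1 : ℝ) ≤ k := by exact_mod_cast (by omega : 1 ≤ k)
  have hpos : 0 ≤ ((k - 1) * n + 1) * δ := mul_nonneg (by positivity) hδ.le
  rw [← ENNReal.add_lt_add_iff_right ENNReal.ofReal_ne_top,
    ← ENNReal.ofReal_add hpos (sub_nonneg.2 hδw.le)]
  exact (hgain.trans hwide).trans_lt (ENNReal.ofReal_lt_ofReal_iff'.2 ⟨hlt, by linarith⟩)

theorem exists_Ioo_cover_one (hk : 2 ≤ k) (hn : 0 < n) (hεn : 2 * ε * n = 1)
    (hF : ¬ ContainsKAP F k ε) (u : ℝ) {δ : ℝ} (hδ : 0 < δ) :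
    ∃ S : Finset ℝ, #S ≤ (k - 1) * n ∧
      F ∩ Icc u (u + (k * n : ℝ) * δ) ⊆ ⋃ x ∈ S, Ioo x (x + δ) := by
  rcases (F ∩ Icc u (u + (k * n : ℝ) * δ)).eq_empty_or_nonempty with hE | hE
  · exact ⟨∅, by simp, by simp [hE]⟩
  have hE₀ : volume (F ∩ Icc u (u + (k * n : ℝ) * δ)) = 0 :=
    measure_mono_null inter_subset_left (volume_eq_zero_of_not_containsKAP (by omega) hn hεn hF)
  refine exists_Ioo_cover_of_volume_hittingSet_lt (N := k * n) hδ
    (by push_cast; exact inter_subset_right) hE₀ ?_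
  convert volume_hittingSet_lt hk hn hεn hF inter_subset_left hE hδ inter_subset_right using 4
  push_cast [Nat.cast_sub (by omega : 1 ≤ k)]
  ring

theorem exists_Ioo_cover (hk : 2 ≤ k) (hn : 0 < n) (hεn : 2 * ε * n = 1)
    (hF : ¬ ContainsKAP F k ε) (m : ℕ) (u : ℝ) {δ : ℝ} (hδ : 0 < δ) :
    ∃ S : Finset ℝ, #S ≤ ((k - 1) * n) ^ (m + 1) ∧
      F ∩ Icc u (u + (k * n : ℝ) ^ (m + 1) * δ) ⊆ ⋃ x ∈ S, Ioo x (x + δ) := by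
  have hkn : (0 : ℝ) < k * n := by exact_mod_cast Nat.mul_pos (by omega) hn
  obtain ⟨T, hT, hFT⟩ := exists_Icc_cover (by omega) hn hεn hF m u (mul_pos hkn hδ)
  rw [pow_succ, pow_succ, mul_assoc]
  exact exists_subset_biUnion_of_forall_inter_subset_biUnion hT hFT fun x _ =>
    (exists_Ioo_cover_one hk hn hεn hF x hδ).imp fun S hS =>
      ⟨hS.1, (inter_subset_inter_left _ inter_subset_left).trans hS.2⟩

end NoKAP

theorem stmt_2_general (k : ℕ) (hk : 3 ≤ k) (ε : ℝ)
    (n : ℕ) (hn : 0 < n) (hεn : 1 / (2 * ε) = (n : ℝ))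
    (F : Set ℝ) (hF : ¬ ContainsKAP F k ε)
    (a R : ℝ) (hR : 0 < R) (m : ℕ) (hm : 0 < m) :
    (∃ t : Fin (((k - 1) * n) ^ m) → ℝ,
        Set.Icc a (a + R) ∩ F ⊆ ⋃ i, Set.Icc (t i) (t i + (2 * ε / k) ^ m * R)) ∧
      ∀ r : ℝ, (2 * ε / k) ^ m * R ≤ r →
        (coverN (Set.Icc a (a + R) ∩ F) r : ℝ) ≤ (((k : ℝ) - 1) / (2 * ε)) ^ m := by
  have hε : 2 * ε = 1 / n := by rw [← hεn, one_div_one_div]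
  have h2εn : 2 * ε * n = 1 := by rw [hε, one_div_mul_cancel (by positivity)]
  obtain ⟨m, rfl⟩ := Nat.exists_eq_add_one_of_ne_zero hm.ne'
  set L := (2 * ε / k) ^ (m + 1) * R with hLdef
  have hRL : R = (k * n : ℝ) ^ (m + 1) * L := by
    rw [hLdef, hε, div_div, one_div, mul_comm (n : ℝ), ← mul_assoc, ← mul_pow,
      mul_inv_cancel₀ (by positivity), one_pow, one_mul]
  have hL : 0 < L := pos_of_mul_pos_right (hRL ▸ hR) (by positivity)
  obtain ⟨S, hS, hcov⟩ := exists_Ioo_cover (by omega) hn h2εn hF m a hL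
  rw [← hRL, inter_comm] at hcov
  refine ⟨?_, fun r hr => ?_⟩
  · obtain ⟨t, ht⟩ := exists_range_superset_of_card_le hS
    refine ⟨t, hcov.trans (iUnion₂_subset fun x hx => ?_)⟩
    obtain ⟨i, rfl⟩ := ht hx
    exact Ioo_subset_Icc_self.trans (subset_iUnion (fun i => Icc (t i) (t i + L)) i)
  · calc (coverN (Icc a (a + R) ∩ F) r : ℝ) ≤ #S := by
          exact_mod_cast coverN_le_card_of_subset_biUnion_Ioo hr hcov
      _ ≤ (((k - 1) * n) ^ (m + 1) : ℕ) := by exact_mod_cast hS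
      _ = (((k : ℝ) - 1) / (2 * ε)) ^ (m + 1) := by
        rw [div_eq_mul_one_div, hεn]
        push_cast [Nat.cast_sub (by omega : 1 ≤ k)]
        ring

theorem stmt_2 (k : ℕ) (hk : 3 ≤ k) (ε : ℝ) (hε : ε ∈ Set.Ioo (0 : ℝ) 1)
    (n : ℕ) (hn : 0 < n) (hεn : 1 / (2 * ε) = (n : ℝ))
    (F : Set ℝ) (hF : ¬ ContainsKAP F k ε)
    (a R : ℝ) (hR : 0 < R) (m : ℕ) (hm : 0 < m) :
    (∃ t : Fin (((k - 1) * n) ^ m) → ℝ,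
        Set.Icc a (a + R) ∩ F ⊆ ⋃ i, Set.Icc (t i) (t i + (2 * ε / k) ^ m * R)) ∧
      ∀ r : ℝ, (2 * ε / k) ^ m * R ≤ r →
        (coverN (Set.Icc a (a + R) ∩ F) r : ℝ) ≤ (((k : ℝ) - 1) / (2 * ε)) ^ m :=
  stmt_2_general k hk ε n hn hεn F hF a R hR m hm
end

section
/- Let k ≥ 3 be an integer and ε ∈ (0,1) be such that 1/(2ε) is a positive integer. Suppose F ⊆ ℝ does not contain any (k,ε)-AP. Let I be a closed interval of length R > 0, and partition I into the k/(2ε) consecutive closed subintervals I_1, …, I_{k/(2ε)} each of length 2εR/k (enumerated from left to right). Then at most (k−1)/(2ε) of the subintervals I_i intersect F; equivalently, for each residue class j modulo 1/(2ε), at least one of the k intervals I_i with i ≡ j (mod 1/(2ε)) is disjoint from F. -/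
/-! Put `w = 2εR/k` and `n = 1/(2ε)`. For a residue `m` the `k` subintervals `I_{m + tn}`, `t < k`,
have centres in arithmetic progression with common difference `Δ = nw`, and each has radius
`w/2 = εΔ`. So points of `F` in all of them would form a `(k, ε)`-AP: each residue class contains
a subinterval missing `F`, and these `n` subintervals are distinct. -/

open Set

theorem containsKAP_of_inter_Icc_nonempty {F : Set ℝ} {k : ℕ} {ε a Δ : ℝ} (hΔ : 0 < Δ)
    (h : ∀ i < k, (Icc (a + i * Δ - ε * Δ) (a + i * Δ + ε * Δ) ∩ F).Nonempty) :
    ContainsKAP F k ε := by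
  choose! b hbI hbF using h
  refine ⟨b, hbF, a, Δ, hΔ, fun i hi => abs_sub_le_iff.2 ?_⟩
  obtain ⟨hlo, hhi⟩ := hbI i hi
  constructor <;> linarith

theorem exists_Icc_inter_eq_empty_of_not_containsKAP {F : Set ℝ} {k n m : ℕ} {ε a w : ℝ}
    (hF : ¬ ContainsKAP F k ε) (hn : 0 < n) (hεn : ε * n = 1 / 2) (hw : 0 < w) :
    ∃ t < k, Icc (a + ((m + t * n : ℕ) - 1) * w) (a + (m + t * n : ℕ) * w) ∩ F = ∅ := by
  by_contra! hmeet
  refine hF (containsKAP_of_inter_Icc_nonempty (a := a + (m - 1 / 2) * w) (Δ := n * w)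
    (by positivity) fun t ht => ?_)
  have hradius : ε * (n * w) = w / 2 := by rw [← mul_assoc, hεn]; ring
  convert hmeet t ht using 3 <;> push_cast <;> linarith

theorem card_filter_add_le_of_forall_mod {s : Finset ℕ} {P : ℕ → Prop} [DecidablePred P] {n : ℕ}
    (h : ∀ j < n, ∃ i ∈ s, i % n = j ∧ ¬ P i) : (s.filter P).card + n ≤ s.card := by
  have hsurj : SurjOn (· % n) (s.filter (¬ P ·) : Set ℕ) (Finset.range n : Set ℕ) := by
    intro j hj
    obtain ⟨i, his, hij, hPi⟩ := h j (Finset.mem_range.1 hj)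
    exact ⟨i, Finset.mem_filter.2 ⟨his, hPi⟩, hij⟩
  have := Finset.card_le_card_of_surjOn _ hsurj
  rw [Finset.card_range] at this
  have := s.card_filter_add_card_filter_not P
  omega

theorem exists_mod_eq_of_lt {j n : ℕ} (hj : j < n) : ∃ m, 1 ≤ m ∧ m ≤ n ∧ m % n = j := by
  rcases j.eq_zero_or_pos with rfl | hj0
  · exact ⟨n, hj, le_rfl, Nat.mod_self n⟩
  · exact ⟨j, hj0, hj.le, Nat.mod_eq_of_lt hj⟩

open Classical in
theorem stmt_3_general (k : ℕ) (hk : 3 ≤ k) (ε : ℝ) (hε : ε ∈ Set.Ioo (0 : ℝ) 1)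
    (n : ℕ) (hεn : 1 / (2 * ε) = (n : ℝ))
    (F : Set ℝ) (hF : ¬ ContainsKAP F k ε)
    (a R : ℝ) (hR : 0 < R)
    -- the `i`-th subinterval of `I = [a, a+R]`, of length `2εR/k`, for `i = 1, …, k·n`
    (I : ℕ → Set ℝ)
    (hI : ∀ i, I i = Set.Icc (a + ((i : ℝ) - 1) * (2 * ε * R / k))
      (a + (i : ℝ) * (2 * ε * R / k))) :
    ((Finset.Icc 1 (k * n)).filter (fun i => (I i ∩ F).Nonempty)).card ≤ (k - 1) * n ∧
      ∀ j < n, ∃ i ∈ Finset.Icc 1 (k * n), i % n = j ∧ I i ∩ F = ∅ := by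
  have hε0 := hε.1
  have hεn' : ε * n = 1 / 2 := by
    rw [← hεn]; field_simp
  have hk0 : (0 : ℝ) < k := by exact_mod_cast (by omega : 0 < k)
  have hclass : ∀ j < n, ∃ i ∈ Finset.Icc 1 (k * n), i % n = j ∧ I i ∩ F = ∅ := by
    intro j hj
    obtain ⟨m, hm1, hmn, hmj⟩ := exists_mod_eq_of_lt hj
    obtain ⟨t, htk, hempty⟩ := exists_Icc_inter_eq_empty_of_not_containsKAP (m := m) (a := a)
      hF (by omega) hεn' (show 0 < 2 * ε * R / k by positivity)
    refine ⟨m + t * n, Finset.mem_Icc.2 ⟨by omega, ?_⟩, by simp [hmj], by rwa [hI]⟩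
    nlinarith
  refine ⟨?_, hclass⟩
  have := card_filter_add_le_of_forall_mod (P := fun i => (I i ∩ F).Nonempty) fun j hj => by
    simpa only [not_nonempty_iff_eq_empty] using hclass j hj
  rw [Nat.card_Icc] at this
  rw [Nat.sub_one_mul]
  omega

open Classical in
theorem stmt_3 (k : ℕ) (hk : 3 ≤ k) (ε : ℝ) (hε : ε ∈ Set.Ioo (0 : ℝ) 1)
    (n : ℕ) (hn : 0 < n) (hεn : 1 / (2 * ε) = (n : ℝ))
    (F : Set ℝ) (hF : ¬ ContainsKAP F k ε)
    (a R : ℝ) (hR : 0 < R)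
    -- the `i`-th subinterval of `I = [a, a+R]`, of length `2εR/k`, for `i = 1, …, k·n`
    (I : ℕ → Set ℝ)
    (hI : ∀ i, I i = Set.Icc (a + ((i : ℝ) - 1) * (2 * ε * R / k))
      (a + (i : ℝ) * (2 * ε * R / k))) :
    ((Finset.Icc 1 (k * n)).filter (fun i => (I i ∩ F).Nonempty)).card ≤ (k - 1) * n ∧
      ∀ j < n, ∃ i ∈ Finset.Icc 1 (k * n), i % n = j ∧ I i ∩ F = ∅ :=
  stmt_3_general k hk ε hε n hεn F hF a R hR I hI
end

section
/- Let k ≥ 3 be an integer and ε > 0. Suppose F ⊆ ℝ contains no k-term ε-almost arithmetic progression in the sense of Lafont–McReynolds (i.e., no points a_0, …, a_{k−1} ∈ F satisfy |(a_{i+1} − a_i)/(a_{j+1} − a_j) − 1| < ε for all i, j ∈ {0, …, k−2}). Then for every ε' with 0 < ε' < ε/(4 + 2ε), F does not contain any (k,ε')-AP, and consequently the Hausdorff dimension of F satisfies dim_H F ≤ 1 + log(1 − 1/k) / log(k·⌈1/(2ε')⌉). -/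
/-- A set `F ⊆ ℝ` contains a `k`-term `ε`-almost arithmetic progression in the sense of
Lafont–McReynolds. -/
def ContainsLM (F : Set ℝ) (k : ℕ) (ε : ℝ) : Prop :=
  ∃ a : ℕ → ℝ, (∀ i < k, a i ∈ F) ∧
    ∀ i j : ℕ, i + 1 < k → j + 1 < k →
      |(a (i + 1) - a i) / (a (j + 1) - a j) - 1| < ε

/-!
A `(k, ε')`-AP has consecutive gaps within `2ε'Δ` of a common `Δ`, so the ratio of any two gaps
is within `ε` of `1` once `ε' < ε / (4 + 2ε)`.

For the dimension bound put `M = ⌈1 / (2ε')⌉`, cut an interval of length `ℓ` into `kM` cells of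
length `ℓ / (kM)` and, for each residue `r < M`, look at the `k` cells `r, r + M, …, r + (k-1)M`.
Their centres form an arithmetic progression with step `Δ = Mℓ / (kM)`, and a point in each
would be within `ℓ / (2kM) ≤ ε'Δ` of its centre, i.e. a `(k, ε')`-AP. So one cell of each
residue class misses `F`, and `F` meets at most `(k-1)M` of the `kM` cells. Iterating, `F ∩ [c, c+1)`
is covered by `((k-1)M)^n` intervals of length `(kM)^(-n)`, which bounds its Hausdorff dimension
by `log((k-1)M) / log(kM) = 1 + log(1 - 1/k) / log(kM)`.
-/

open Set

lemma IsKAP.exists_abs_sub_sub_le {k : ℕ} {ε : ℝ} {b : ℕ → ℝ} (h : IsKAP k ε b) :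
    ∃ Δ > 0, ∀ m, m + 1 < k → |b (m + 1) - b m - Δ| ≤ 2 * ε * Δ := by
  obtain ⟨a, Δ, hΔ, hb⟩ := h
  refine ⟨Δ, hΔ, fun m hm => ?_⟩
  have hm₀ := hb m (by omega)
  have hm₁ := hb (m + 1) hm
  push_cast at hm₁
  calc |b (m + 1) - b m - Δ| = |(b (m + 1) - (a + (m + 1) * Δ)) - (b m - (a + m * Δ))| := by
        ring_nf
    _ ≤ |b (m + 1) - (a + (m + 1) * Δ)| + |b m - (a + m * Δ)| := abs_sub _ _
    _ ≤ 2 * ε * Δ := by linarith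

lemma abs_div_sub_one_lt_of_abs_sub_le {x y Δ η ε : ℝ} (hε : 0 < ε) (hΔ : 0 < Δ)
    (hx : |x - Δ| ≤ η * Δ) (hy : |y - Δ| ≤ η * Δ) (hη : 2 * η < ε * (1 - η)) :
    |x / y - 1| < ε := by
  have hη₁ : η < 1 := by nlinarith [abs_nonneg (x - Δ)]
  have hy_lower : (1 - η) * Δ ≤ y := by linarith [neg_abs_le (y - Δ)]
  have hy₀ : 0 < y := lt_of_lt_of_le (by nlinarith) hy_lower
  have hxy : |x - y| ≤ 2 * η * Δ := by
    calc |x - y| = |(x - Δ) - (y - Δ)| := by ring_nf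
      _ ≤ |x - Δ| + |y - Δ| := abs_sub _ _
      _ ≤ 2 * η * Δ := by linarith
  rw [div_sub_one hy₀.ne', abs_div, abs_of_pos hy₀, div_lt_iff₀ hy₀]
  nlinarith

lemma containsLM_of_containsKAP {F : Set ℝ} {k : ℕ} {ε ε' : ℝ} (hε : 0 < ε)
    (hε' : ε' < ε / (4 + 2 * ε)) (h : ContainsKAP F k ε') : ContainsLM F k ε := by
  obtain ⟨b, hbF, hb⟩ := h
  obtain ⟨Δ, hΔ, hgap⟩ := hb.exists_abs_sub_sub_le
  have hη : 2 * (2 * ε') < ε * (1 - 2 * ε') := by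
    rw [lt_div_iff₀ (by positivity)] at hε'
    linarith
  exact ⟨b, hbF, fun i j hi hj =>
    abs_div_sub_one_lt_of_abs_sub_le hε hΔ (hgap i hi) (hgap j hj) hη⟩

lemma pos_of_one_le_mul_natCast {a : ℝ} {M : ℕ} (h : 1 ≤ a * M) : 0 < M :=
  Nat.pos_of_ne_zero fun hM => by simp [hM] at h; linarith

def gridCell (c δ : ℝ) (t : ℕ) : Set ℝ := Ico (c + t * δ) (c + t * δ + δ)

lemma Ico_subset_biUnion_gridCell (c : ℝ) {δ : ℝ} (hδ : 0 < δ) (n : ℕ) :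
    Ico c (c + n * δ) ⊆ ⋃ t ∈ Finset.range n, gridCell c δ t := by
  intro y ⟨hcy, hyn⟩
  have hq : 0 ≤ (y - c) / δ := div_nonneg (by linarith) hδ.le
  set t := ⌊(y - c) / δ⌋₊
  have ht_le : (t : ℝ) * δ ≤ y - c := (le_div_iff₀ hδ).1 (Nat.floor_le hq)
  have ht_lt : y - c < (t + 1) * δ := (div_lt_iff₀ hδ).1 (Nat.lt_floor_add_one _)
  have htn : t < n := by
    rw [Nat.floor_lt hq, div_lt_iff₀ hδ]
    linarith
  exact mem_biUnion (Finset.mem_coe.2 (Finset.mem_range.2 htn)) ⟨by linarith, by linarith⟩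

lemma exists_disjoint_gridCell {F : Set ℝ} {k M : ℕ} {ε' : ℝ} (hno : ¬ ContainsKAP F k ε')
    (hM : 1 ≤ 2 * ε' * M) (c : ℝ) {δ : ℝ} (hδ : 0 < δ) (r : ℕ) :
    ∃ i < k, Disjoint F (gridCell c δ (i * M + r)) := by
  by_contra! hmeet
  choose! b hbF hb using fun i hi => not_disjoint_iff.1 (hmeet i hi)
  have hM₀ : (0 : ℝ) < M := Nat.cast_pos.2 (pos_of_one_le_mul_natCast hM)
  -- cell `i * M + r` is an interval of length `δ` centred at `c + (r + 1/2) δ + i (M δ)`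
  refine hno ⟨b, hbF, c + (r + 1 / 2) * δ, M * δ, by positivity, fun i hi => ?_⟩
  obtain ⟨h₁, h₂⟩ := hb i hi
  push_cast at h₁ h₂
  rw [abs_le]
  constructor <;> nlinarith

open scoped Classical in
lemma card_filter_gridCell_nonempty_le {F : Set ℝ} {k M : ℕ} {ε' : ℝ}
    (hno : ¬ ContainsKAP F k ε') (hM : 1 ≤ 2 * ε' * M) (c : ℝ) {δ : ℝ} (hδ : 0 < δ) :
    ((Finset.range (k * M)).filter fun t => (F ∩ gridCell c δ t).Nonempty).card
      ≤ (k - 1) * M := by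
  have hM₀ : 0 < M := pos_of_one_le_mul_natCast hM
  calc _ ≤ (k - 1) * (Finset.range M).card := by
        refine Finset.card_le_mul_card_image_of_maps_to (f := (· % M))
          (fun t _ => Finset.mem_range.2 (Nat.mod_lt t hM₀)) _ fun r _ => ?_
        obtain ⟨i, hik, hi⟩ := exists_disjoint_gridCell hno hM c hδ r
        calc _ ≤ (((Finset.range k).erase i).image (· * M + r)).card := by
              refine Finset.card_le_card fun t ht => ?_
              simp only [Finset.mem_filter, Finset.mem_range] at ht
              obtain ⟨⟨htk, hne⟩, rfl⟩ := ht
              refine Finset.mem_image.2 ⟨t / M, ?_, Nat.div_add_mod' t M⟩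
              refine Finset.mem_erase.2 ⟨fun hti => ?_, Finset.mem_range.2 ?_⟩
              · rw [← Nat.div_add_mod' t M, hti] at hne
                exact hne.not_disjoint hi
              · exact Nat.div_lt_of_lt_mul (by rwa [mul_comm])
          _ ≤ ((Finset.range k).erase i).card := Finset.card_image_le
          _ = k - 1 := by rw [Finset.card_erase_of_mem (Finset.mem_range.2 hik), Finset.card_range]
    _ = (k - 1) * M := by rw [Finset.card_range]

open scoped Classical in
lemma exists_finset_cover_Ico {F : Set ℝ} {k M : ℕ} {ε' : ℝ} (hk : 0 < k)
    (hno : ¬ ContainsKAP F k ε') (hM : 1 ≤ 2 * ε' * M) (c : ℝ) {ℓ : ℝ} (hℓ : 0 < ℓ) :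
    ∃ T : Finset ℝ, T.card ≤ (k - 1) * M ∧
      F ∩ Ico c (c + ℓ) ⊆ ⋃ y ∈ T, Ico y (y + ℓ / (k * M)) := by
  have hM₀ : 0 < M := pos_of_one_le_mul_natCast hM
  have hkM : (0 : ℝ) < k * M := by positivity
  set δ := ℓ / (k * M)
  have hδ : 0 < δ := div_pos hℓ hkM
  refine ⟨((Finset.range (k * M)).filter fun t => (F ∩ gridCell c δ t).Nonempty).image
    (fun t : ℕ => c + t * δ), Finset.card_image_le.trans
      (card_filter_gridCell_nonempty_le hno hM c hδ), ?_⟩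
  rintro y ⟨hyF, hy⟩
  have hℓ_eq : ℓ = ((k * M : ℕ) : ℝ) * δ := by push_cast; exact (mul_div_cancel₀ ℓ hkM.ne').symm
  rw [hℓ_eq] at hy
  obtain ⟨t, ht, hyt⟩ := mem_iUnion₂.1 (Ico_subset_biUnion_gridCell c hδ _ hy)
  exact mem_biUnion (Finset.mem_image_of_mem _
    (Finset.mem_filter.2 ⟨ht, y, hyF, hyt⟩)) hyt

lemma exists_finset_cover_Ico_pow {s : Set ℝ} {N : ℕ} {K : ℝ} (hK : 0 < K)
    (hcov : ∀ c ℓ : ℝ, 0 < ℓ → ∃ T : Finset ℝ, T.card ≤ N ∧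
      s ∩ Ico c (c + ℓ) ⊆ ⋃ y ∈ T, Ico y (y + ℓ / K))
    (c : ℝ) {ℓ : ℝ} (hℓ : 0 < ℓ) (n : ℕ) :
    ∃ T : Finset ℝ, T.card ≤ N ^ n ∧ s ∩ Ico c (c + ℓ) ⊆ ⋃ y ∈ T, Ico y (y + ℓ / K ^ n) := by
  induction n with
  | zero => exact ⟨{c}, by simp, fun y hy => by simpa using hy.2⟩
  | succ n ih =>
    obtain ⟨T, hT, hsT⟩ := ih
    choose g hg hsg using fun y : ℝ => hcov y (ℓ / K ^ n) (by positivity)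
    classical
    refine ⟨T.biUnion g, ?_, fun x hx => ?_⟩
    · calc (T.biUnion g).card ≤ T.card * N := Finset.card_biUnion_le_card_mul _ _ _ fun y _ => hg y
        _ ≤ N ^ n * N := Nat.mul_le_mul_right N hT
        _ = N ^ (n + 1) := (pow_succ N n).symm
    · obtain ⟨y, hyT, hxy⟩ := mem_iUnion₂.1 (hsT hx)
      obtain ⟨z, hzg, hxz⟩ := mem_iUnion₂.1 (hsg y ⟨hx.1, hxy⟩)
      rw [div_div, ← pow_succ] at hxz
      exact mem_biUnion (Finset.mem_coe.2 (Finset.mem_biUnion.2 ⟨y, hyT, hzg⟩)) hxz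

open MeasureTheory in
lemma hausdorffMeasure_eq_zero_of_finset_cover {X : Type*} [EMetricSpace X] [MeasurableSpace X]
    [BorelSpace X] {s : Set X} {N : ℕ} {r : ENNReal} {d : ℝ} (hr : r < 1) (hd : 0 ≤ d)
    (hNr : N * r ^ d < 1)
    (hcov : ∀ n : ℕ, ∃ T : Finset (Set X), T.card ≤ N ^ n ∧ s ⊆ ⋃₀ ↑T ∧
      ∀ u ∈ T, Metric.ediam u ≤ r ^ n) :
    μH[d] s = 0 := by
  choose T hT hsT hdiam using hcov
  have hsum : ∀ n, ∑ u : T n, Metric.ediam (u : Set X) ^ d ≤ (N * r ^ d) ^ n := fun n =>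
    calc ∑ u : T n, Metric.ediam (u : Set X) ^ d ≤ ∑ _u : T n, (r ^ n) ^ d :=
          Finset.sum_le_sum fun u _ => ENNReal.rpow_le_rpow (hdiam n u u.2) hd
      _ = (T n).card * (r ^ d) ^ n := by
          rw [Finset.sum_const, Finset.card_univ, Fintype.card_coe, nsmul_eq_mul,
            ← ENNReal.rpow_natCast r, ← ENNReal.rpow_mul, mul_comm (n : ℝ) d,
            ENNReal.rpow_mul_natCast]
      _ ≤ N ^ n * (r ^ d) ^ n := by gcongr; exact_mod_cast hT n
      _ = (N * r ^ d) ^ n := (mul_pow _ _ _).symm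
  refine le_antisymm ?_ zero_le
  calc μH[d] s ≤ Filter.liminf (fun n => ∑ u : T n, Metric.ediam (u : Set X) ^ d) Filter.atTop :=
        Measure.hausdorffMeasure_le_liminf_sum d s (fun n => r ^ n)
          (ENNReal.tendsto_pow_atTop_nhds_zero_of_lt_one hr) (fun n (u : T n) => (u : Set X))
          (Filter.Eventually.of_forall fun n u => hdiam n u u.2)
          (Filter.Eventually.of_forall fun n => (hsT n).trans_eq sUnion_eq_iUnion)
    _ ≤ Filter.liminf (fun n => (N * r ^ d) ^ n) Filter.atTop :=
        Filter.liminf_le_liminf (Filter.Eventually.of_forall hsum)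
    _ = 0 := (ENNReal.tendsto_pow_atTop_nhds_zero_of_lt_one hNr).liminf_eq

lemma dimH_le_of_finset_cover_Ico {s : Set ℝ} {N : ℕ} {K : ℝ} (hK : 1 < K)
    (hcov : ∀ n : ℕ, ∃ T : Finset ℝ, T.card ≤ N ^ n ∧ s ⊆ ⋃ y ∈ T, Ico y (y + 1 / K ^ n)) :
    dimH s ≤ ENNReal.ofReal (Real.log N / Real.log K) := by
  refine dimH_le fun d hd => le_of_not_gt fun hlt => ?_
  rw [← ENNReal.ofReal_coe_nnreal, ENNReal.ofReal_lt_ofReal_iff'] at hlt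
  have hK₀ : 0 < K := one_pos.trans hK
  have hNK : (N : ℝ) < K ^ (d : ℝ) := by
    rcases Nat.eq_zero_or_pos N with hN | hN
    · rw [hN, Nat.cast_zero]
      exact Real.rpow_pos_of_pos hK₀ _
    · rw [Real.lt_rpow_iff_log_lt (by exact_mod_cast hN) hK₀, ← div_lt_iff₀ (Real.log_pos hK)]
      exact hlt.1
  have hNr : (N : ENNReal) * ENNReal.ofReal (1 / K) ^ (d : ℝ) < 1 := by
    rw [ENNReal.ofReal_rpow_of_nonneg (by positivity) d.coe_nonneg, ← ENNReal.ofReal_natCast,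
      ← ENNReal.ofReal_mul (Nat.cast_nonneg N), ENNReal.ofReal_lt_one, Real.div_rpow zero_le_one
      hK₀.le, Real.one_rpow, mul_one_div, div_lt_one (by positivity)]
    exact hNK
  have hzero := hausdorffMeasure_eq_zero_of_finset_cover
    (ENNReal.ofReal_lt_one.2 ((div_lt_one hK₀).2 hK)) d.coe_nonneg hNr fun n => by
      obtain ⟨T, hT, hsT⟩ := hcov n
      classical
      refine ⟨T.image fun y => Ico y (y + 1 / K ^ n), Finset.card_image_le.trans hT,
        fun x hx => ?_, ?_⟩
      · obtain ⟨y, hy, hxy⟩ := mem_iUnion₂.1 (hsT hx)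
        exact ⟨_, Finset.mem_coe.2 (Finset.mem_image_of_mem _ hy), hxy⟩
      · simp only [Finset.mem_image, forall_exists_index, and_imp, forall_apply_eq_imp_iff₂,
          Real.ediam_Ico, add_sub_cancel_left]
        intro y _
        rw [← ENNReal.ofReal_pow (by positivity), one_div_pow]
  rw [hzero] at hd
  exact ENNReal.zero_ne_top hd

theorem dimH_le_of_not_containsKAP {F : Set ℝ} {k M : ℕ} {ε' : ℝ} (hk : 2 ≤ k)
    (hno : ¬ ContainsKAP F k ε') (hM : 1 ≤ 2 * ε' * M) :
    dimH F ≤ ENNReal.ofReal (1 + Real.log (1 - 1 / k) / Real.log (k * M)) := by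
  have hM₀ : 0 < M := pos_of_one_le_mul_natCast hM
  have hk₁ : (1 : ℝ) < k := by exact_mod_cast hk
  have hM₁ : (1 : ℝ) ≤ M := by exact_mod_cast hM₀
  have hK : (1 : ℝ) < k * M := by nlinarith
  have hunit : ∀ c : ℤ, dimH (F ∩ Ico (c : ℝ) (c + 1)) ≤
      ENNReal.ofReal (Real.log ((k - 1) * M : ℕ) / Real.log (k * M)) := fun c =>
    dimH_le_of_finset_cover_Ico hK (exists_finset_cover_Ico_pow (by positivity)
      (fun c _ hℓ => exists_finset_cover_Ico (by omega) hno hM c hℓ) c one_pos)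
  have hlog : Real.log ((k - 1) * M : ℕ) = Real.log (k * M) + Real.log (1 - 1 / k) := by
    rw [← Real.log_mul (by positivity) (sub_pos.2 ((div_lt_one (by positivity)).2 hk₁)).ne']
    congr 1
    push_cast [Nat.cast_sub (by omega : 1 ≤ k)]
    field_simp
  calc dimH F = dimH (⋃ c : ℤ, F ∩ Ico (c : ℝ) (c + 1)) := by
        rw [← inter_iUnion, iUnion_Ico_intCast, inter_univ]
    _ = ⨆ c : ℤ, dimH (F ∩ Ico (c : ℝ) (c + 1)) := dimH_iUnion _
    _ ≤ _ := iSup_le hunit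
    _ = _ := by rw [hlog, add_div, div_self (Real.log_pos hK).ne']

theorem stmt_6 (k : ℕ) (hk : 3 ≤ k) (ε : ℝ) (hε : 0 < ε)
    (F : Set ℝ) (hF : ¬ ContainsLM F k ε) :
    ∀ ε' : ℝ, 0 < ε' → ε' < ε / (4 + 2 * ε) →
      ¬ ContainsKAP F k ε' ∧
        dimH F ≤ ENNReal.ofReal
          (1 + Real.log (1 - 1 / k) / Real.log (k * ⌈1 / (2 * ε')⌉₊)) := by
  intro ε' hε' hε'ε
  have hno : ¬ ContainsKAP F k ε' := fun h => hF (containsLM_of_containsKAP hε hε'ε h)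
  have hM : 1 ≤ 2 * ε' * ⌈1 / (2 * ε')⌉₊ := by
    rw [← div_le_iff₀' (by positivity)]
    exact Nat.le_ceil _
  exact ⟨hno, dimH_le_of_not_containsKAP (by omega) hno hM⟩
end

section
/- Let d ≥ 1, let k ≥ 2 be an integer, and let ε ∈ (0, 1/√d). If F ⊆ ℝ^d satisfies dim_H F > d + log(1 − 1/k) / log(k·⌈√d/(2ε)⌉), then for every unit vector e ∈ S^{d−1}, the set F contains a (k,ε,{e})-AP; that is, F gets within distance εΔ of every point of some arithmetic progression t, t + Δe, …, t + (k−1)Δe (for some t ∈ ℝ^d and Δ > 0) in every direction e. -/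
/-!
After a rotation we may take `e` to be a coordinate vector `e_j`. Suppose `F` contains no
`(k, ε, {e_j})`-AP, and let `N = ⌈√d / (2ε)⌉`, `M = kN`. Cut a grid cube into `M ^ d` subcubes of
side `s`. Each point of a subcube lies within `√d s / 2 ≤ ε N s` of its centre, and the centres of
the subcubes `q, q + N, …, q + (k - 1)N` of a column along `e_j` form an AP of step `N s`; hence
those `k` subcubes do not all meet `F`. So at most `M - N` subcubes of each column, and at most
`(1 - 1/k) M ^ d` subcubes in all, meet `F`. Iterating, `F ∩ [0,1)^d` is covered by
`((1 - 1/k) M ^ d) ^ n` cubes of side `M ^ (-n)`, so `μH[t] F = 0` for every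
`t > d + log (1 - 1/k) / log M`.
-/

/-- A set `F ⊆ ℝ^d` contains a `(k, ε, {e})`-AP in the direction `e`: there exist
`t ∈ ℝ^d` and `Δ > 0` such that every point `t + iΔe`, `i = 0, …, k-1`, is within
distance `εΔ` of some point of `F`. -/
def ContainsKAPdir {d : ℕ} (F : Set (EuclideanSpace ℝ (Fin d)))
    (k : ℕ) (ε : ℝ) (e : EuclideanSpace ℝ (Fin d)) : Prop :=
  ∃ (t : EuclideanSpace ℝ (Fin d)) (Δ : ℝ), 0 < Δ ∧
    ∀ i < k, ∃ y ∈ F, ‖t + ((i : ℝ) * Δ) • e - y‖ ≤ ε * Δ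

open MeasureTheory Set Filter Metric Topology

noncomputable section

open scoped Classical

theorem card_filter_Ico_le_of_forall_exists_not {P : ℤ → Prop} [DecidablePred P] {b : ℤ}
    {k N : ℕ} (h : ∀ q < N, ∃ i < k, ¬ P (b + (q + i * N : ℕ))) :
    ((Finset.Ico b (b + (k * N : ℕ))).filter P).card ≤ k * N - N := by
  choose f hfk hfP using h
  -- one failure of `P` in each residue class mod `N`; these are pairwise distinct
  let g : Fin N → ℤ := fun q => b + (q + f q q.2 * N : ℕ)
  have hg_inj : Function.Injective g := by
    intro q₁ q₂ hq
    have hq' : (q₁ + f q₁ q₁.2 * N) % N = (q₂ + f q₂ q₂.2 * N) % N := by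
      simp only [g, add_right_inj, Nat.cast_inj] at hq
      rw [hq]
    rw [Nat.add_mul_mod_self_right, Nat.add_mul_mod_self_right, Nat.mod_eq_of_lt q₁.2,
      Nat.mod_eq_of_lt q₂.2] at hq'
    exact Fin.ext hq'
  have hg_mem : ∀ q ∈ Finset.univ, g q ∈ (Finset.Ico b (b + (k * N : ℕ))).filter (¬ P ·) := by
    intro q _
    have hlt : (q : ℕ) + f q q.2 * N < k * N :=
      calc (q : ℕ) + f q q.2 * N < (f q q.2 + 1) * N := by rw [add_mul, one_mul, add_comm]; omega
        _ ≤ k * N := Nat.mul_le_mul_right _ (hfk q q.2)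
    refine Finset.mem_filter.2 ⟨Finset.mem_Ico.2 ⟨?_, ?_⟩, hfP q q.2⟩
    · exact le_add_of_nonneg_right (Int.natCast_nonneg _)
    · exact add_lt_add_right (Nat.cast_lt.2 hlt) b
  have hN := Finset.card_le_card_of_injOn g hg_mem hg_inj.injOn
  have hsplit := Finset.card_filter_add_card_filter_not (s := Finset.Ico b (b + (k * N : ℕ))) P
  rw [Int.card_Ico, add_sub_cancel_left, Int.toNat_natCast] at hsplit
  rw [Finset.card_univ, Fintype.card_fin] at hN
  omega

theorem mul_pow_mul_inv_rpow_lt_one {a M t : ℝ} {d : ℕ} (ha : 0 < a) (hM : 1 < M)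
    (ht : d + Real.log a / Real.log M < t) : a * M ^ d * M⁻¹ ^ t < 1 := by
  have hlogM : 0 < Real.log M := Real.log_pos hM
  have hM0 : 0 < M := by linarith
  have hlog : Real.log a < (t - d) * Real.log M := (div_lt_iff₀ hlogM).1 (by linarith)
  rw [Real.inv_rpow hM0.le, ← div_eq_mul_inv, div_lt_one (by positivity),
    ← Real.log_lt_log_iff (by positivity) (by positivity), Real.log_mul ha.ne' (by positivity),
    Real.log_pow, Real.log_rpow hM0]
  linarith

theorem natCast_sub_mul_pow_eq {k N d : ℕ} (hk : 0 < k) (hd : 0 < d) :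
    (((k * N - N) * (k * N) ^ (d - 1) : ℕ) : ℝ) = (1 - 1 / k) * ((k : ℝ) * N) ^ d := by
  obtain ⟨d, rfl⟩ := Nat.exists_eq_add_of_lt hd
  rw [Nat.cast_mul, Nat.cast_sub (Nat.le_mul_of_pos_left N hk)]
  push_cast
  field_simp
  ring

theorem hausdorffMeasure_eq_zero_of_finite_covers {X ι : Type*} [EMetricSpace X]
    [MeasurableSpace X] [BorelSpace X] {S : Set X} {t D r : ℝ} {m : ℕ} (ht : 0 ≤ t)
    (hD : 0 ≤ D) (hr0 : 0 ≤ r) (hr1 : r < 1) (hmr : m * r ^ t < 1)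
    (T : ℕ → Finset ι) (U : ℕ → ι → Set X) (hT : ∀ n, (T n).card ≤ m ^ n)
    (hU : ∀ n, ∀ i ∈ T n, ediam (U n i) ≤ ENNReal.ofReal (D * r ^ n))
    (hS : ∀ n, S ⊆ ⋃ i ∈ T n, U n i) : μH[t] S = 0 := by
  have hsum (n : ℕ) : ∑ i : T n, ediam (U n i) ^ t ≤ ENNReal.ofReal (D ^ t * (m * r ^ t) ^ n) :=
    calc ∑ i : T n, ediam (U n i) ^ t
        ≤ ∑ _i : T n, ENNReal.ofReal ((D * r ^ n) ^ t) := by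
          gcongr with i
          rw [← ENNReal.ofReal_rpow_of_nonneg (by positivity) ht]
          exact ENNReal.rpow_le_rpow (hU n i i.2) ht
      _ ≤ (m ^ n : ℕ) * ENNReal.ofReal ((D * r ^ n) ^ t) := by
          rw [Finset.sum_const, Finset.card_univ, Fintype.card_coe, nsmul_eq_mul]
          gcongr
          exact hT n
      _ = ENNReal.ofReal (D ^ t * (m * r ^ t) ^ n) := by
          rw [← ENNReal.ofReal_natCast, ← ENNReal.ofReal_mul (by positivity),
            Real.mul_rpow hD (by positivity), ← Real.rpow_natCast r, ← Real.rpow_mul hr0,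
            mul_comm (n : ℝ), Real.rpow_mul hr0, Real.rpow_natCast]
          push_cast
          congr 1
          ring
  have hdiam : Tendsto (fun n : ℕ => ENNReal.ofReal (D * r ^ n)) atTop (𝓝 0) := by
    simpa using ENNReal.tendsto_ofReal
      ((tendsto_pow_atTop_nhds_zero_of_lt_one hr0 hr1).const_mul D)
  have hbound : Tendsto (fun n : ℕ => ENNReal.ofReal (D ^ t * (m * r ^ t) ^ n)) atTop (𝓝 0) := by
    simpa using ENNReal.tendsto_ofReal
      ((tendsto_pow_atTop_nhds_zero_of_lt_one (by positivity) hmr).const_mul (D ^ t))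
  refine le_antisymm ?_ zero_le
  calc μH[t] S ≤ liminf (fun n => ∑ i : T n, ediam (U n i) ^ t) atTop :=
        Measure.hausdorffMeasure_le_liminf_sum (ι := fun n => T n) t S _ hdiam (fun n i => U n i)
          (Eventually.of_forall fun n i => hU n i i.2)
          (Eventually.of_forall fun n => by simpa only [iUnion_subtype] using hS n)
    _ ≤ liminf (fun n : ℕ => ENNReal.ofReal (D ^ t * (m * r ^ t) ^ n)) atTop :=
        liminf_le_liminf (Eventually.of_forall hsum)
    _ = 0 := hbound.liminf_eq

section Grid

variable {ι : Type*}

theorem EuclideanSpace.norm_le_sqrt_card_mul [Fintype ι] {v : EuclideanSpace ℝ ι} {c : ℝ}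
    (hc : 0 ≤ c) (h : ∀ j, |v j| ≤ c) : ‖v‖ ≤ √(Fintype.card ι) * c := by
  rw [EuclideanSpace.norm_eq]
  calc √(∑ j, ‖v j‖ ^ 2) ≤ √(∑ _j : ι, c ^ 2) := by
        gcongr with j
        exact h j
    _ = √(Fintype.card ι) * c := by
        rw [Finset.sum_const, Finset.card_univ, nsmul_eq_mul, Real.sqrt_mul (by positivity),
          Real.sqrt_sq hc]

/-- The half-open cube `∏ j, [x j * s, (x j + 1) * s)` of the grid of mesh `s`. -/
def gridCube (s : ℝ) (x : ι → ℤ) : Set (EuclideanSpace ℝ ι) :=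
  {y | ∀ j, ⌊y j / s⌋ = x j}

def gridCenter (s : ℝ) (x : ι → ℤ) : EuclideanSpace ℝ ι :=
  WithLp.toLp 2 fun j => (x j + 1 / 2) * s

variable {s : ℝ} {x : ι → ℤ} {y : EuclideanSpace ℝ ι}

theorem mem_gridCube_iff (hs : 0 < s) :
    y ∈ gridCube s x ↔ ∀ j, x j * s ≤ y j ∧ y j < (x j + 1) * s := by
  refine forall_congr' fun j => ?_
  rw [Int.floor_eq_iff, le_div_iff₀ hs, div_lt_iff₀ hs]

theorem norm_gridCenter_sub_le [Fintype ι] (hs : 0 < s) (hy : y ∈ gridCube s x) :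
    ‖gridCenter s x - y‖ ≤ √(Fintype.card ι) * (s / 2) := by
  refine EuclideanSpace.norm_le_sqrt_card_mul (by positivity) fun j => ?_
  have := (mem_gridCube_iff hs).1 hy j
  simp only [gridCenter, PiLp.sub_apply, abs_le]
  constructor <;> linarith

theorem ediam_gridCube_le [Fintype ι] (hs : 0 < s) (x : ι → ℤ) :
    ediam (gridCube s x) ≤ ENNReal.ofReal (√(Fintype.card ι) * s) := by
  refine ediam_le fun y hy z hz => ?_
  rw [edist_dist]
  refine ENNReal.ofReal_le_ofReal ?_
  calc dist y z ≤ dist (gridCenter s x) y + dist (gridCenter s x) z := dist_triangle_left _ _ _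
    _ ≤ √(Fintype.card ι) * (s / 2) + √(Fintype.card ι) * (s / 2) := by
        rw [dist_eq_norm, dist_eq_norm]
        exact add_le_add (norm_gridCenter_sub_le hs hy) (norm_gridCenter_sub_le hs hz)
    _ = √(Fintype.card ι) * s := by ring

/-- The indices of the `M ^ card ι` cubes of mesh `s / M` that tile the cube of mesh `s` at `x`. -/
def gridChildren [Fintype ι] [DecidableEq ι] (M : ℕ) (x : ι → ℤ) : Finset (ι → ℤ) :=
  Fintype.piFinset fun j => Finset.Ico (M * x j) (M * x j + M)

theorem floor_mem_gridChildren [Fintype ι] [DecidableEq ι] {M : ℕ} (hM : 0 < M)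
    (hy : y ∈ gridCube s x) :
    (fun j => ⌊y j / (s / M)⌋) ∈ gridChildren M x := by
  refine Fintype.mem_piFinset.2 fun j => ?_
  have hfloor : ⌊y j / (s / M)⌋ / (M : ℤ) = x j := by
    rw [← hy j, ← Int.floor_div_natCast, div_div, div_mul_cancel₀ _ (by positivity)]
  rw [Finset.mem_Ico, ← hfloor]
  constructor
  · exact Int.mul_ediv_self_le (by positivity)
  · have := Int.lt_mul_ediv_self_add (x := ⌊y j / (s / M)⌋) (k := M) (by positivity)
    linarith

theorem card_image_update_gridChildren_le [Fintype ι] [DecidableEq ι] (M : ℕ) (x : ι → ℤ)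
    (j : ι) :
    ((gridChildren M x).image fun z => Function.update z j 0).card ≤
      M ^ (Fintype.card ι - 1) := by
  set T : ι → Finset ℤ := fun l => Finset.Ico (M * x l) (M * x l + M)
  calc _ ≤ (Fintype.piFinset (Function.update T j {0})).card := by
        refine Finset.card_le_card fun w hw => ?_
        obtain ⟨z, hz, rfl⟩ := Finset.mem_image.1 hw
        refine Fintype.mem_piFinset.2 fun l => ?_
        by_cases hl : l = j
        · subst hl
          simp
        · rw [Function.update_of_ne hl, Function.update_of_ne hl]
          exact Fintype.mem_piFinset.1 hz l
    _ = ∏ l, Function.update (fun _ => M) j 1 l := by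
        rw [Fintype.card_piFinset]
        refine Finset.prod_congr rfl fun l _ => ?_
        by_cases hl : l = j
        · subst hl
          simp
        · simp [hl, T]
    _ = M ^ (Fintype.card ι - 1) := by
        rw [Finset.prod_update_of_mem (Finset.mem_univ j), Finset.prod_const, one_mul,
          Finset.card_sdiff_of_subset (by simp), Finset.card_singleton, Finset.card_univ]

end Grid

section HitCubes

variable {ι : Type*} [Fintype ι] [DecidableEq ι]

def hitCubes (F : Set (EuclideanSpace ℝ ι)) (M : ℕ) (x₀ : ι → ℤ) : ℕ → Finset (ι → ℤ)
  | 0 => {x₀}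
  | n + 1 => (hitCubes F M x₀ n).biUnion fun x =>
      (gridChildren M x).filter fun z => (F ∩ gridCube ((M : ℝ)⁻¹ ^ (n + 1)) z).Nonempty

variable {F : Set (EuclideanSpace ℝ ι)} {M : ℕ}

theorem card_hitCubes_le {c : ℕ} (hc : ∀ s : ℝ, 0 < s → ∀ x : ι → ℤ,
      ((gridChildren M x).filter fun z => (F ∩ gridCube s z).Nonempty).card ≤ c)
    (hM : 0 < M) (x₀ : ι → ℤ) (n : ℕ) : (hitCubes F M x₀ n).card ≤ c ^ n := by
  induction n with
  | zero => simp [hitCubes]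
  | succ n ih =>
    calc (hitCubes F M x₀ (n + 1)).card ≤ (hitCubes F M x₀ n).card * c :=
          Finset.card_biUnion_le_card_mul _ _ _ fun x _ => hc _ (by positivity) x
      _ ≤ c ^ n * c := Nat.mul_le_mul_right _ ih
      _ = c ^ (n + 1) := (pow_succ _ _).symm

theorem exists_mem_hitCubes (hM : 0 < M) {x₀ : ι → ℤ} {y : EuclideanSpace ℝ ι} (hyF : y ∈ F)
    (hy : y ∈ gridCube 1 x₀) (n : ℕ) :
    ∃ z ∈ hitCubes F M x₀ n, y ∈ gridCube ((M : ℝ)⁻¹ ^ n) z := by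
  induction n with
  | zero => exact ⟨x₀, Finset.mem_singleton_self _, by rwa [pow_zero]⟩
  | succ n ih =>
    obtain ⟨z, hz, hyz⟩ := ih
    have hscale : (M : ℝ)⁻¹ ^ n / M = (M : ℝ)⁻¹ ^ (n + 1) := by rw [pow_succ, div_eq_mul_inv]
    have hchild := floor_mem_gridChildren hM hyz
    simp only [hscale] at hchild
    refine ⟨_, Finset.mem_biUnion.2 ⟨z, hz, Finset.mem_filter.2 ⟨hchild, y, hyF, fun _ => rfl⟩⟩,
      fun _ => rfl⟩

theorem hausdorffMeasure_eq_zero_of_card_hit_gridChildren_le {c : ℕ} {t : ℝ} (ht : 0 ≤ t)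
    (hM : 1 < M) (hcM : c * (M : ℝ)⁻¹ ^ t < 1) (hc : ∀ s : ℝ, 0 < s → ∀ x : ι → ℤ,
      ((gridChildren M x).filter fun z => (F ∩ gridCube s z).Nonempty).card ≤ c) :
    μH[t] F = 0 := by
  have hF : F ⊆ ⋃ x₀ : ι → ℤ, F ∩ gridCube 1 x₀ := fun y hy =>
    mem_iUnion.2 ⟨fun j => ⌊y j / 1⌋, hy, fun _ => rfl⟩
  refine measure_mono_null hF (measure_iUnion_null fun x₀ => ?_)
  have hM0 : (0 : ℝ) < M := by positivity
  exact hausdorffMeasure_eq_zero_of_finite_covers ht (Real.sqrt_nonneg _) (by positivity)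
    (inv_lt_one_of_one_lt₀ (by exact_mod_cast hM)) hcM (hitCubes F M x₀)
    (fun n z => gridCube ((M : ℝ)⁻¹ ^ n) z) (card_hitCubes_le hc (Nat.zero_lt_of_lt hM) x₀)
    (fun n z _ => ediam_gridCube_le (by positivity) z)
    (fun n y hy => by
      obtain ⟨z, hz, hyz⟩ := exists_mem_hitCubes (Nat.zero_lt_of_lt hM) hy.1 hy.2 n
      exact mem_biUnion hz hyz)

end HitCubes

section Progressions

variable {d k N : ℕ} {ε s : ℝ} {F : Set (EuclideanSpace ℝ (Fin d))}

theorem pos_of_sqrt_le_mul (j : Fin d) (hN : √d ≤ 2 * ε * N) : 0 < N := by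
  have hd : 0 < √d := Real.sqrt_pos.2 (by exact_mod_cast j.pos)
  refine Nat.pos_of_ne_zero fun hN0 => ?_
  rw [hN0, Nat.cast_zero, mul_zero] at hN
  linarith

theorem containsKAPdir_single_of_nonempty_inter_gridCube (hN : √d ≤ 2 * ε * N) (hs : 0 < s)
    (w : Fin d → ℤ) (j : Fin d) (a : ℤ)
    (h : ∀ i < k, (F ∩ gridCube s (Function.update w j (a + i * N))).Nonempty) :
    ContainsKAPdir F k ε (EuclideanSpace.single j 1) := by
  have hN0 : 0 < (N : ℝ) := by exact_mod_cast pos_of_sqrt_le_mul j hN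
  refine ⟨gridCenter s (Function.update w j a), N * s, by positivity, fun i hi => ?_⟩
  obtain ⟨y, hyF, hy⟩ := h i hi
  have hcenter : gridCenter s (Function.update w j a) + ((i : ℝ) * (N * s)) •
      EuclideanSpace.single j 1 = gridCenter s (Function.update w j (a + i * N)) := by
    ext l
    by_cases hl : l = j
    · subst hl
      simp only [gridCenter, PiLp.add_apply, Function.update_self, PiLp.smul_apply,
        PiLp.single_eq_same, smul_eq_mul, mul_one, Int.cast_add, Int.cast_mul, Int.cast_natCast]
      ring
    · simp [gridCenter, hl]
  refine ⟨y, hyF, ?_⟩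
  calc ‖gridCenter s (Function.update w j a) + ((i : ℝ) * (N * s)) •
        EuclideanSpace.single j 1 - y‖ ≤ √d * (s / 2) := by
        simpa [hcenter] using norm_gridCenter_sub_le hs hy
    _ ≤ 2 * ε * N * (s / 2) := by gcongr
    _ = ε * (N * s) := by ring

theorem card_filter_nonempty_inter_gridCube_update_le (hN : √d ≤ 2 * ε * N) (hs : 0 < s)
    (j : Fin d) (hF : ¬ ContainsKAPdir F k ε (EuclideanSpace.single j 1)) (w : Fin d → ℤ)
    (b : ℤ) :
    ((Finset.Ico b (b + (k * N : ℕ))).filter fun a =>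
      (F ∩ gridCube s (Function.update w j a)).Nonempty).card ≤ k * N - N :=
  card_filter_Ico_le_of_forall_exists_not fun q _ => by
    by_contra! hall
    refine hF (containsKAPdir_single_of_nonempty_inter_gridCube hN hs w j (b + q) fun i hi => ?_)
    simpa [add_assoc] using hall i hi

theorem card_filter_nonempty_inter_gridChildren_le (hN : √d ≤ 2 * ε * N) (hs : 0 < s)
    (j : Fin d) (hF : ¬ ContainsKAPdir F k ε (EuclideanSpace.single j 1)) (x : Fin d → ℤ) :
    ((gridChildren (k * N) x).filter fun z => (F ∩ gridCube s z).Nonempty).card ≤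
      (k * N - N) * (k * N) ^ (d - 1) := by
  set H := (gridChildren (k * N) x).filter fun z => (F ∩ gridCube s z).Nonempty
  have hfiber : ∀ w ∈ H.image (Function.update · j 0),
      (H.filter fun z => Function.update z j 0 = w).card ≤ k * N - N := by
    intro w _
    refine (Finset.card_le_card fun z hz => ?_).trans
      ((Finset.card_image_le (f := Function.update w j)).trans
        (card_filter_nonempty_inter_gridCube_update_le hN hs j hF w (↑(k * N) * x j)))
    obtain ⟨hzH, rfl⟩ := Finset.mem_filter.1 hz
    obtain ⟨hz, hzF⟩ := Finset.mem_filter.1 hzH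
    have hzj : Function.update (Function.update z j 0) j (z j) = z := by simp
    refine Finset.mem_image.2 ⟨z j, Finset.mem_filter.2 ⟨?_, ?_⟩, hzj⟩
    · exact Fintype.mem_piFinset.1 hz j
    · rwa [hzj]
  calc H.card ≤ (k * N - N) * (H.image (Function.update · j 0)).card :=
        Finset.card_le_mul_card_image H _ hfiber
    _ ≤ (k * N - N) * (k * N) ^ (d - 1) := by
        gcongr
        calc _ ≤ ((gridChildren (k * N) x).image (Function.update · j 0)).card :=
              Finset.card_le_card (Finset.image_subset_image (Finset.filter_subset _ _))
          _ ≤ (k * N) ^ (d - 1) := by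
              simpa using card_image_update_gridChildren_le (k * N) x j

theorem dimH_le_of_not_containsKAPdir_single (hk : 2 ≤ k) (hN : √d ≤ 2 * ε * N) (j : Fin d)
    (hF : ¬ ContainsKAPdir F k ε (EuclideanSpace.single j 1)) :
    dimH F ≤ ENNReal.ofReal (d + Real.log (1 - 1 / k) / Real.log (k * N)) := by
  have hN0 := pos_of_sqrt_le_mul j hN
  have hM : 1 < k * N := by nlinarith
  refine le_of_not_gt fun hlt => ?_
  obtain ⟨r, hr, hrF⟩ := ENNReal.lt_iff_exists_nnreal_btwn.1 hlt
  have hrt : d + Real.log (1 - 1 / k) / Real.log (k * N) < r := lt_of_not_ge fun h =>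
    hr.not_ge (by simpa using ENNReal.ofReal_le_ofReal h)
  have hcount :
      (((k * N - N) * (k * N) ^ (d - 1) : ℕ) : ℝ) * ((k * N : ℕ) : ℝ)⁻¹ ^ (r : ℝ) < 1 := by
    rw [natCast_sub_mul_pow_eq (by omega) j.pos, Nat.cast_mul]
    refine mul_pow_mul_inv_rpow_lt_one (sub_pos.2 ?_) (by exact_mod_cast hM) hrt
    rw [div_lt_one (by positivity)]
    exact_mod_cast (by omega : 1 < k)
  have hzero : μH[r] F = 0 := hausdorffMeasure_eq_zero_of_card_hit_gridChildren_le r.2 hM hcount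
    fun s hs x => card_filter_nonempty_inter_gridChildren_le hN hs j hF x
  simpa [hzero] using hausdorffMeasure_of_lt_dimH hrF

end Progressions

theorem ContainsKAPdir.of_preimage {d d' k : ℕ} {ε : ℝ} {F : Set (EuclideanSpace ℝ (Fin d'))}
    {v : EuclideanSpace ℝ (Fin d)}
    (L : EuclideanSpace ℝ (Fin d) →ₗᵢ[ℝ] EuclideanSpace ℝ (Fin d'))
    (h : ContainsKAPdir (L ⁻¹' F) k ε v) : ContainsKAPdir F k ε (L v) := by
  obtain ⟨t, Δ, hΔ, ht⟩ := h
  refine ⟨L t, Δ, hΔ, fun i hi => ?_⟩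
  obtain ⟨y, hy, hyt⟩ := ht i hi
  exact ⟨L y, hy, by rwa [← L.map_smul, ← map_add, ← map_sub, L.norm_map]⟩

end

theorem stmt_13_general (d : ℕ) (k : ℕ) (hk : 2 ≤ k)
    (ε : ℝ) (hε1 : 0 < ε)
    (F : Set (EuclideanSpace ℝ (Fin d)))
    (hF : dimH F > ENNReal.ofReal
      ((d : ℝ) + Real.log (1 - 1 / (k : ℝ)) /
        Real.log (k * ⌈Real.sqrt d / (2 * ε)⌉₊))) :
    ∀ e : EuclideanSpace ℝ (Fin d), ‖e‖ = 1 → ContainsKAPdir F k ε e := by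
  intro e he
  obtain ⟨j, -⟩ : ∃ j, e j ≠ 0 := by
    by_contra! h
    have : e = 0 := by ext j; exact h j
    simp [this] at he
  have hN : √d ≤ 2 * ε * ⌈√d / (2 * ε)⌉₊ := by
    have := Nat.le_ceil (√d / (2 * ε))
    rw [div_le_iff₀ (by positivity)] at this
    linarith
  set L := (ℝ ∙ (EuclideanSpace.single j 1 - e))ᗮ.reflection
  have hLe : L (EuclideanSpace.single j 1) = e := Submodule.reflection_sub (by simp [he])
  rw [← hLe]
  refine ContainsKAPdir.of_preimage L.toLinearIsometry (by_contra fun h => ?_)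
  have hdim := dimH_le_of_not_containsKAPdir_single hk hN j h
  rw [show ⇑L.toLinearIsometry = L.toIsometryEquiv from rfl, IsometryEquiv.dimH_preimage] at hdim
  exact not_le.2 hF hdim

theorem stmt_13 (d : ℕ) (hd : 1 ≤ d) (k : ℕ) (hk : 2 ≤ k)
    (ε : ℝ) (hε1 : 0 < ε) (hε2 : ε < 1 / Real.sqrt d)
    (F : Set (EuclideanSpace ℝ (Fin d)))
    (hF : dimH F > ENNReal.ofReal
      ((d : ℝ) + Real.log (1 - 1 / (k : ℝ)) /
        Real.log (k * ⌈Real.sqrt d / (2 * ε)⌉₊))) :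
    ∀ e : EuclideanSpace ℝ (Fin d), ‖e‖ = 1 → ContainsKAPdir F k ε e :=
  stmt_13_general d k hk ε hε1 F hF
end

section
/- Fix an integer k ≥ 3 and ε ∈ (0,1). For each positive integer N, let r_k(ε,N) denote the largest cardinality of a set A ⊆ {1, 2, …, N} which does not contain any (k,ε)-AP. Then limsup_{N→∞} log r_k(ε,N) / log N ≤ 1 + log(1 − 1/k) / log(k·⌈1/(2ε)⌉), where ⌈x⌉ denotes the smallest integer greater than or equal to x. -/
/-- `rk k ε N` is the largest cardinality of a subset `A ⊆ {1, …, N}` which does not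
contain any `(k, ε)`-AP. -/
noncomputable def rk (k : ℕ) (ε : ℝ) (N : ℕ) : ℕ :=
  sSup {n : ℕ | ∃ A : Finset ℕ, A.card = n ∧ A ⊆ Finset.Icc 1 N ∧
    ¬ ContainsKAP ((Nat.cast : ℕ → ℝ) '' (A : Set ℕ)) k ε}

/-!
Split `{1, …, kqs}`, with `q = ⌈1/(2ε)⌉`, into `kq` consecutive blocks of length `s`. For each
residue `j mod q`, the `k` blocks with index `≡ j` are spaced `qs` apart and have width
`s ≤ 2εqs`, so one point from each of them would form a `(k, ε)`-AP; an AP-free set therefore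
misses one block in each class, and meets every other block in a translate of an AP-free subset
of `{1, …, s}`. Hence `rk (kqs) ≤ (k-1)q · rk s`, so `rk ((kq)^t) ≤ ((k-1)q)^t`, and monotonicity
of `rk` turns this into the exponent `log((k-1)q) / log(kq) = 1 + log(1 - 1/k) / log(kq)`.
-/

open Filter Finset Real Topology

section rk

variable {k : ℕ} {ε : ℝ}

lemma bddAbove_rk_set (k : ℕ) (ε : ℝ) (N : ℕ) :
    BddAbove {n : ℕ | ∃ A : Finset ℕ, A.card = n ∧ A ⊆ Icc 1 N ∧
      ¬ ContainsKAP ((Nat.cast : ℕ → ℝ) '' (A : Set ℕ)) k ε} := by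
  refine ⟨N, ?_⟩
  rintro n ⟨A, rfl, hA, -⟩
  simpa using card_le_card hA

lemma card_le_rk {N : ℕ} {A : Finset ℕ} (hA : A ⊆ Icc 1 N)
    (hAP : ¬ ContainsKAP ((Nat.cast : ℕ → ℝ) '' (A : Set ℕ)) k ε) :
    A.card ≤ rk k ε N :=
  le_csSup (bddAbove_rk_set k ε N) ⟨A, rfl, hA, hAP⟩

lemma rk_le_of_forall {N B : ℕ}
    (h : ∀ A : Finset ℕ, A ⊆ Icc 1 N →
      ¬ ContainsKAP ((Nat.cast : ℕ → ℝ) '' (A : Set ℕ)) k ε → A.card ≤ B) :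
    rk k ε N ≤ B :=
  csSup_le' fun _ ⟨A, hcard, hA, hAP⟩ => hcard ▸ h A hA hAP

lemma rk_mono (k : ℕ) (ε : ℝ) : Monotone (rk k ε) := fun _ _ hNN' =>
  rk_le_of_forall fun _ hA hAP => card_le_rk (hA.trans (Icc_subset_Icc le_rfl hNN')) hAP

lemma rk_le_self (N : ℕ) : rk k ε N ≤ N :=
  rk_le_of_forall fun _ hA _ => by simpa using card_le_card hA

lemma ContainsKAP.translate {F : Set ℝ} (h : ContainsKAP F k ε) (c : ℝ) :
    ContainsKAP ((· + c) '' F) k ε := by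
  obtain ⟨b, hbF, a, Δ, hΔ, hb⟩ := h
  refine ⟨(b · + c), fun i hi => ⟨b i, hbF i hi, rfl⟩, a + c, Δ, hΔ, fun i hi => ?_⟩
  convert hb i hi using 2
  ring

lemma ContainsKAP.mono {F G : Set ℝ} (h : ContainsKAP F k ε) (hFG : F ⊆ G) :
    ContainsKAP G k ε := by
  obtain ⟨b, hbF, hb⟩ := h
  exact ⟨b, fun i hi => hFG (hbF i hi), hb⟩

lemma card_le_rk_of_subset_Icc {A : Finset ℕ} {c s : ℕ} (hA : A ⊆ Icc (c + 1) (c + s))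
    (hAP : ¬ ContainsKAP ((Nat.cast : ℕ → ℝ) '' (A : Set ℕ)) k ε) :
    A.card ≤ rk k ε s := by
  have hc : ∀ n ∈ A, c + 1 ≤ n ∧ n ≤ c + s := fun n hn => mem_Icc.mp (hA hn)
  rw [← card_image_of_injOn (f := (· - c)) fun x hx y hy hxy => by
    have := hc x hx; have := hc y hy; simp only at hxy; omega]
  refine card_le_rk ?_ fun hB => hAP ?_
  · intro n hn
    obtain ⟨x, hx, rfl⟩ := mem_image.mp hn
    have := hc x hx
    simp only [mem_Icc]
    omega
  · refine (hB.translate c).mono ?_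
    rintro _ ⟨_, ⟨w, hw, rfl⟩, rfl⟩
    obtain ⟨x, hx, rfl⟩ := mem_image.mp hw
    have := hc x hx
    exact ⟨x, hx, by push_cast [Nat.cast_sub (by omega : c ≤ x)]; ring⟩

end rk

lemma isKAP_of_mem_Icc {k : ℕ} {ε x Δ w : ℝ} {b : ℕ → ℝ} (hΔ : 0 < Δ) (hw : w ≤ 2 * ε * Δ)
    (hb : ∀ i < k, b i ∈ Set.Icc (x + i * Δ) (x + i * Δ + w)) : IsKAP k ε b := by
  refine ⟨x + w / 2, Δ, hΔ, fun i hi => abs_le.mpr ⟨?_, ?_⟩⟩ <;>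
  · have := hb i hi
    simp only [Set.mem_Icc] at this
    linarith

lemma mem_Icc_of_sub_one_div_eq {n s p : ℕ} (hn : 1 ≤ n) (hs : 0 < s) (h : (n - 1) / s = p) :
    n ∈ Icc (p * s + 1) (p * s + s) := by
  have hdiv := Nat.div_add_mod (n - 1) s
  have hmod := Nat.mod_lt (n - 1) hs
  rw [h, mul_comm] at hdiv
  rw [mem_Icc]
  omega

lemma sum_le_of_exists_eq_zero {ι : Type*} [DecidableEq ι] {s : Finset ι} {f : ι → ℕ} {B : ℕ}
    (hB : ∀ i ∈ s, f i ≤ B) (h0 : ∃ i ∈ s, f i = 0) : ∑ i ∈ s, f i ≤ (s.card - 1) * B := by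
  obtain ⟨i₀, hi₀, hf⟩ := h0
  rw [← add_sum_erase _ _ hi₀, hf, zero_add, ← card_erase_of_mem hi₀, ← smul_eq_mul]
  exact sum_le_card_nsmul _ _ _ fun i hi => hB i (mem_of_mem_erase hi)

lemma rk_mul_le {k q s : ℕ} {ε : ℝ} (hεq : 1 ≤ 2 * ε * q) (hs : 0 < s) :
    rk k ε (k * q * s) ≤ (k - 1) * q * rk k ε s := by
  have hq : 0 < q := Nat.pos_of_ne_zero (by rintro rfl; norm_num at hεq)
  refine rk_le_of_forall fun A hA hAP => ?_
  have hA1 : ∀ n ∈ A, 1 ≤ n ∧ n ≤ k * q * s := fun n hn => mem_Icc.mp (hA hn)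
  let block : ℕ → ℕ × ℕ := fun n => ((n - 1) / s % q, (n - 1) / s / q)
  let fiber : ℕ × ℕ → Finset ℕ := fun ji => A.filter (block · = ji)
  have hwindow : ∀ j i, ∀ n ∈ fiber (j, i),
      n ∈ Icc ((i * q + j) * s + 1) ((i * q + j) * s + s) := by
    intro j i n hn
    obtain ⟨hnA, hblock⟩ := mem_filter.mp hn
    simp only [block, Prod.mk.injEq] at hblock
    refine mem_Icc_of_sub_one_div_eq (hA1 n hnA).1 hs ?_
    rw [← hblock.1, ← hblock.2, Nat.div_add_mod']
  have hfiber : ∀ j i, (fiber (j, i)).card ≤ rk k ε s := fun j i =>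
    card_le_rk_of_subset_Icc (fun n hn => hwindow j i n hn)
      fun h => hAP (h.mono (Set.image_mono (coe_subset.mpr (filter_subset _ _))))
  have hmiss : ∀ j < q, ∃ i < k, (fiber (j, i)).card = 0 := by
    intro j _
    by_contra! hall
    choose! b hb using fun i hi => card_pos.mp (Nat.pos_of_ne_zero (hall i hi))
    refine hAP ⟨fun i => b i, fun i hi => ⟨b i, (mem_filter.mp (hb i hi)).1, rfl⟩, ?_⟩
    refine isKAP_of_mem_Icc (x := j * s + 1) (Δ := q * s) (w := s - 1) (by positivity)
      (by nlinarith [(Nat.one_le_cast (α := ℝ)).mpr hs]) fun i hi => ?_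
    obtain ⟨hlo, hhi⟩ := mem_Icc.mp (hwindow j i _ (hb i hi))
    constructor
    · exact_mod_cast (show (j * s + 1 + i * (q * s) : ℕ) ≤ b i by linarith)
    · have : (b i : ℝ) ≤ (i * q + j) * s + s := by exact_mod_cast hhi
      linarith
  have hmaps : ∀ n ∈ A, block n ∈ range q ×ˢ range k := by
    intro n hn
    have hlt : (n - 1) / s < k * q :=
      Nat.div_lt_of_lt_mul (by have := hA1 n hn; rw [mul_comm s]; omega)
    simp only [block, mem_product, mem_range]
    exact ⟨Nat.mod_lt _ hq, Nat.div_lt_of_lt_mul (by rwa [mul_comm])⟩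
  calc A.card = ∑ j ∈ range q, ∑ i ∈ range k, (fiber (j, i)).card := by
        rw [card_eq_sum_card_fiberwise hmaps, sum_product]
    _ ≤ ∑ _j ∈ range q, (k - 1) * rk k ε s := sum_le_sum fun j hj => by
        obtain ⟨i, hi, h0⟩ := hmiss j (mem_range.mp hj)
        simpa using sum_le_of_exists_eq_zero (fun i _ => hfiber j i) ⟨i, mem_range.mpr hi, h0⟩
    _ = (k - 1) * q * rk k ε s := by simp only [sum_const, card_range, smul_eq_mul]; ring

lemma rk_pow_le {k q : ℕ} {ε : ℝ} (hk : 0 < k) (hεq : 1 ≤ 2 * ε * q) (t : ℕ) :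
    rk k ε ((k * q) ^ t) ≤ ((k - 1) * q) ^ t := by
  induction t with
  | zero => simpa using rk_le_self 1
  | succ t ih =>
    have hkq : 0 < k * q := Nat.mul_pos hk (Nat.pos_of_ne_zero (by rintro rfl; norm_num at hεq))
    calc rk k ε ((k * q) ^ (t + 1)) = rk k ε (k * q * (k * q) ^ t) := by rw [pow_succ']
      _ ≤ (k - 1) * q * rk k ε ((k * q) ^ t) := rk_mul_le hεq (pow_pos hkq t)
      _ ≤ ((k - 1) * q) ^ (t + 1) := by rw [pow_succ']; gcongr

lemma log_div_log_le_of_pow_le {f : ℕ → ℕ} (hf : Monotone f) {m M : ℕ} (hm : 1 < m)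
    (hfM : ∀ t, f (m ^ t) ≤ M ^ t) {N : ℕ} (hN : m ≤ N) :
    log (f N) / log N ≤ (1 + 1 / Nat.log m N) * (log M / log m) := by
  set t := Nat.log m N
  have ht : 1 ≤ t := Nat.le_log_of_pow_le hm (by simpa using hN)
  have hlogm : 0 < log m := log_pos (by exact_mod_cast hm)
  have hnum : log (f N) ≤ (t + 1) * log M := by
    have hfN : f N ≤ M ^ (t + 1) := (hf (Nat.lt_pow_succ_log_self hm N).le).trans (hfM _)
    rcases (f N).eq_zero_or_pos with h0 | hpos
    · rw [h0, Nat.cast_zero, log_zero]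
      exact mul_nonneg (by positivity) (log_natCast_nonneg M)
    · calc log (f N) ≤ log ((M : ℝ) ^ (t + 1)) := log_le_log (by positivity) (by exact_mod_cast hfN)
        _ = (t + 1) * log M := by rw [log_pow]; push_cast; ring
  have hden : t * log m ≤ log N := by
    rw [← log_pow]
    exact log_le_log (by positivity) (by exact_mod_cast Nat.pow_log_le_self m (by omega))
  calc log (f N) / log N ≤ (t + 1) * log M / (t * log m) :=
        div_le_div₀ (mul_nonneg (by positivity) (log_natCast_nonneg M)) hnum
          (mul_pos (by exact_mod_cast ht) hlogm) hden
    _ = (1 + 1 / t) * (log M / log m) := by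
        have : (t : ℝ) ≠ 0 := by positivity
        field_simp

lemma limsup_log_div_log_le {f : ℕ → ℕ} (hf : Monotone f) {m M : ℕ} (hm : 1 < m)
    (hfM : ∀ t, f (m ^ t) ≤ M ^ t) :
    limsup (fun N : ℕ => log (f N) / log N) atTop ≤ log M / log m := by
  have hlog : Tendsto (Nat.log m) atTop atTop :=
    tendsto_atTop_atTop.mpr fun t => ⟨m ^ t, fun N hN => Nat.le_log_of_pow_le hm hN⟩
  have hbound : Tendsto (fun N => (1 + 1 / (Nat.log m N : ℝ)) * (log M / log m)) atTop
      (𝓝 (log M / log m)) := by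
    simpa using ((tendsto_one_div_atTop_nhds_zero_nat (𝕜 := ℝ)).comp hlog).const_add 1
      |>.mul_const (log M / log m)
  calc limsup (fun N : ℕ => log (f N) / log N) atTop
      ≤ limsup (fun N => (1 + 1 / (Nat.log m N : ℝ)) * (log M / log m)) atTop :=
        limsup_le_limsup (eventually_atTop.mpr ⟨m, fun N => log_div_log_le_of_pow_le hf hm hfM⟩)
          (isCoboundedUnder_le_of_le atTop fun N =>
            div_nonneg (log_natCast_nonneg _) (log_natCast_nonneg _))
          hbound.isBoundedUnder_le
    _ = log M / log m := hbound.limsup_eq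

theorem stmt_15 (k : ℕ) (hk : 3 ≤ k) (ε : ℝ) (hε : ε ∈ Set.Ioo (0 : ℝ) 1) :
    Filter.limsup (fun N : ℕ => Real.log (rk k ε N) / Real.log N) Filter.atTop ≤
      1 + Real.log (1 - 1 / k) / Real.log (k * ⌈1 / (2 * ε)⌉₊) := by
  set q := ⌈1 / (2 * ε)⌉₊
  have hεq : 1 ≤ 2 * ε * q := by
    have := Nat.le_ceil (1 / (2 * ε))
    rwa [div_le_iff₀ (by linarith [hε.1]), mul_comm] at this
  have hq : 0 < q := Nat.ceil_pos.mpr (by have := hε.1; positivity)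
  have hkq : (((k - 1) * q : ℕ) : ℝ) = (1 - 1 / k) * (k * q) := by
    have : (k : ℝ) ≠ 0 := by positivity
    push_cast [Nat.cast_sub (by omega : 1 ≤ k)]
    field_simp
  have hk1 : (1 - 1 / k : ℝ) ≠ 0 := by
    rw [sub_ne_zero, ne_comm, one_div, inv_ne_one]
    exact_mod_cast (by omega : k ≠ 1)
  have hlog : 0 < log (k * q) := log_pos (by norm_cast; nlinarith)
  calc limsup (fun N : ℕ => log (rk k ε N) / log N) atTop
      ≤ log (((k - 1) * q : ℕ) : ℝ) / log ((k * q : ℕ) : ℝ) :=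
        limsup_log_div_log_le (rk_mono k ε) (by nlinarith) (rk_pow_le (by omega) hεq)
    _ = 1 + log (1 - 1 / k) / log (k * q) := by
        rw [hkq, log_mul hk1 (by positivity), Nat.cast_mul]
        field_simp
        ring
end
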